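/- arXiv:2004.06798 — 10 statements merged into one kernel-verified Lean document; each statement's English description precedes it below -/
import Mathlib

section
/- Theorem 4.3(i). Assume the nonsingularity assumption. Then every probability measure μ* on X such that Pμ* = μ*, and which is an extreme point of the convex set of probability measures ν on X with Pν = ν, is either absolutely continuous with respect to ℓ̄ (μ* ≪ ℓ̄) or mutually singular with ℓ̄ (μ* ⟂ ℓ̄). -/
/-!
Split an invariant probability measure as `μ = σ + α` with `σ ⟂ ℓ̄` and `α ≪ ℓ̄`. Nonsingularity of
the flows `S i t` and of the jumps `w θ` means that `P(x, ·)` charges no `ℓ̄`-null set for `ℓ̄`-a.e.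
`x`, so `Pα ≪ ℓ̄`. Comparing `Pσ + Pα = σ + α` on an `ℓ̄`-null set carrying `σ`, and using that `P`
creates no mass, shows that `σ`, and then `α`, are invariant. If both are nonzero, `μ` is a proper
convex combination of their normalisations, so extremality makes these equal, which is impossible
for mutually singular probability measures.
-/

open MeasureTheory ENNReal ProbabilityTheory Filter

noncomputable section

/-- The one-step transition probability of the chain of post-jump locations. -/
def Ptrans {Y I' Θ : Type*} [MeasurableSpace Y] [Fintype I'] [MeasurableSpace Θ]
    (ϑ : Measure Θ) (Λ : ℝ)
    (S : I' → ℝ → Y → Y) (w : Θ → Y → Y) (p : Θ → Y → ℝ) (π' : I' → I' → Y → ℝ)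
    (x : Y × I') (A : Set (Y × I')) : ℝ≥0∞ :=
  ∑ j : I', ∫⁻ θ, (∫⁻ t in Set.Ioi (0:ℝ),
      ENNReal.ofReal (Λ * Real.exp (-(Λ*t))) *
      Set.indicator A (fun _ => (1:ℝ≥0∞)) (w θ (S x.2 t x.1), j) *
      ENNReal.ofReal (π' x.2 j (w θ (S x.2 t x.1))) *
      ENNReal.ofReal (p θ (S x.2 t x.1))) ∂ϑ

open Set

section Invariant

variable {X : Type*} [MeasurableSpace X] {P : X → Set X → ℝ≥0∞}

variable (P) in
def IsInvariantMeasure (μ : Measure X) : Prop :=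
  ∀ A, MeasurableSet A → ∫⁻ x, P x A ∂μ = μ A

variable (P) in
def IsExtremeInvariantMeasure (μ : Measure X) : Prop :=
  ∀ (ν₁ ν₂ : Measure X) (a : ℝ≥0∞), IsProbabilityMeasure ν₁ → IsProbabilityMeasure ν₂ →
    IsInvariantMeasure P ν₁ → IsInvariantMeasure P ν₂ → 0 < a → a < 1 →
    μ = a • ν₁ + (1 - a) • ν₂ → ν₁ = ν₂

theorem IsInvariantMeasure.smul {μ : Measure X} (h : IsInvariantMeasure P μ) (c : ℝ≥0∞) :
    IsInvariantMeasure P (c • μ) := fun A hA => by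
  rw [lintegral_smul_measure, h A hA, Measure.smul_apply, smul_eq_mul]

theorem IsExtremeInvariantMeasure.smul_inv_eq {μ ν₁ ν₂ : Measure X} [IsProbabilityMeasure μ]
    (hext : IsExtremeInvariantMeasure P μ) (hμ : μ = ν₁ + ν₂)
    (h₁ : IsInvariantMeasure P ν₁) (h₂ : IsInvariantMeasure P ν₂) (hν₁ : ν₁ ≠ 0) (hν₂ : ν₂ ≠ 0) :
    (ν₁ univ)⁻¹ • ν₁ = (ν₂ univ)⁻¹ • ν₂ := by
  have : IsFiniteMeasure ν₁ := isFiniteMeasure_of_le μ (hμ ▸ Measure.le_add_right le_rfl)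
  have : IsFiniteMeasure ν₂ := isFiniteMeasure_of_le μ (hμ ▸ Measure.le_add_left le_rfl)
  have : NeZero ν₁ := ⟨hν₁⟩
  have : NeZero ν₂ := ⟨hν₂⟩
  have hmass : ν₁ univ + ν₂ univ = 1 := by rw [← Measure.add_apply, ← hμ, measure_univ]
  have hsub : 1 - ν₁ univ = ν₂ univ := by
    rw [← hmass, ENNReal.add_sub_cancel_left (measure_ne_top ν₁ univ)]
  have hrescale : ∀ ν : Measure X, [IsFiniteMeasure ν] → ν ≠ 0 → ν univ • ((ν univ)⁻¹ • ν) = ν :=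
    fun ν _ hν => by
      rw [smul_smul, ENNReal.mul_inv_cancel (Measure.measure_univ_ne_zero.mpr hν)
        (measure_ne_top ν univ), one_smul]
  refine hext _ _ (ν₁ univ) isProbabilityMeasureSMul isProbabilityMeasureSMul (h₁.smul _)
    (h₂.smul _) (Measure.measure_univ_pos.mpr hν₁) ?_ ?_
  · rw [← hmass]
    exact ENNReal.lt_add_right (measure_ne_top ν₁ univ) (Measure.measure_univ_ne_zero.mpr hν₂)
  · rw [hsub, hrescale ν₁ hν₁, hrescale ν₂ hν₂, hμ]

theorem le_of_subset_of_additive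
    (hPadd : ∀ x A B, MeasurableSet A → MeasurableSet B → Disjoint A B →
      P x (A ∪ B) = P x A + P x B)
    {x : X} {A B : Set X} (hA : MeasurableSet A) (hB : MeasurableSet B) (hAB : A ⊆ B) :
    P x A ≤ P x B := by
  rw [← union_sdiff_cancel hAB, hPadd x A (B \ A) hA (hB.diff hA) disjoint_sdiff_right]
  exact le_self_add

theorem lintegral_union_of_additive (hPmeas : ∀ A, MeasurableSet A → Measurable fun x => P x A)
    (hPadd : ∀ x A B, MeasurableSet A → MeasurableSet B → Disjoint A B →
      P x (A ∪ B) = P x A + P x B)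
    (ν : Measure X) {A B : Set X} (hA : MeasurableSet A) (hB : MeasurableSet B)
    (hAB : Disjoint A B) :
    ∫⁻ x, P x (A ∪ B) ∂ν = ∫⁻ x, P x A ∂ν + ∫⁻ x, P x B ∂ν := by
  simp_rw [hPadd _ _ _ hA hB hAB]
  exact lintegral_add_left (hPmeas A hA) _

theorem IsInvariantMeasure.of_add_of_mutuallySingular {ℓ σ α : Measure X} [IsFiniteMeasure σ]
    (hPmeas : ∀ A, MeasurableSet A → Measurable fun x => P x A)
    (hPadd : ∀ x A B, MeasurableSet A → MeasurableSet B → Disjoint A B →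
      P x (A ∪ B) = P x A + P x B)
    (hPuniv : ∀ x, P x univ ≤ 1)
    (hnull : ∀ A, MeasurableSet A → ℓ A = 0 → ∀ᵐ x ∂ℓ, P x A = 0)
    (hinv : IsInvariantMeasure P (σ + α)) (hσ : σ ⟂ₘ ℓ) (hα : α ≪ ℓ) :
    IsInvariantMeasure P σ ∧ IsInvariantMeasure P α := by
  obtain ⟨s, hs, hσs, hℓs⟩ := hσ
  have hαP : ∀ B, MeasurableSet B → ℓ B = 0 → ∫⁻ x, P x B ∂α = 0 := fun B hB hB0 =>
    (lintegral_congr_ae ((hnull B hB hB0).filter_mono hα.ae_le)).trans lintegral_zero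
  have hσ_off_s : ∀ B, MeasurableSet B → B ⊆ sᶜ → ∫⁻ x, P x B ∂σ = σ B := by
    intro B hB hBs
    have hB0 : ℓ B = 0 := measure_mono_null hBs hℓs
    have h := hinv B hB
    rwa [lintegral_add_measure, hαP B hB hB0, Measure.add_apply, hα hB0, add_zero, add_zero] at h
  -- `P` does not increase mass and `σ` lives on `sᶜ`, so `Pσ` has no room left on `s`
  have hσ_s : ∫⁻ x, P x s ∂σ = 0 := by
    have h := lintegral_union_of_additive hPmeas hPadd σ hs.compl hs disjoint_compl_left
    rw [compl_union_self, hσ_off_s sᶜ hs.compl subset_rfl] at h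
    have hle : σ sᶜ + ∫⁻ x, P x s ∂σ ≤ σ sᶜ + 0 := by
      rw [← h, add_zero]
      exact (lintegral_mono hPuniv).trans_eq
        (by rw [lintegral_one, ← measure_add_measure_compl hs, hσs, zero_add])
    exact nonpos_iff_eq_zero.mp ((ENNReal.add_le_add_iff_left (measure_ne_top σ _)).mp hle)
  have hσinv : IsInvariantMeasure P σ := by
    intro A hA
    have h := lintegral_union_of_additive hPmeas hPadd σ (hA.inter hs) (hA.inter hs.compl)
      (disjoint_compl_right.mono inter_subset_right inter_subset_right)
    have hAs : ∫⁻ x, P x (A ∩ s) ∂σ = 0 := nonpos_iff_eq_zero.mp <| hσ_s ▸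
      lintegral_mono fun x => le_of_subset_of_additive hPadd (hA.inter hs) hs inter_subset_right
    rw [inter_union_compl, hAs, zero_add, hσ_off_s _ (hA.inter hs.compl) inter_subset_right,
      measure_inter_conull (by rwa [compl_compl])] at h
    exact h
  refine ⟨hσinv, fun A hA => ?_⟩
  have h := hinv A hA
  rw [lintegral_add_measure, hσinv A hA, Measure.add_apply] at h
  exact (ENNReal.add_right_inj (measure_ne_top σ A)).mp h

theorem IsExtremeInvariantMeasure.absolutelyContinuous_or_mutuallySingular
    {ℓ μ : Measure X} [SigmaFinite ℓ] [IsProbabilityMeasure μ]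
    (hPmeas : ∀ A, MeasurableSet A → Measurable fun x => P x A)
    (hPadd : ∀ x A B, MeasurableSet A → MeasurableSet B → Disjoint A B →
      P x (A ∪ B) = P x A + P x B)
    (hPuniv : ∀ x, P x univ ≤ 1)
    (hnull : ∀ A, MeasurableSet A → ℓ A = 0 → ∀ᵐ x ∂ℓ, P x A = 0)
    (hinv : IsInvariantMeasure P μ) (hext : IsExtremeInvariantMeasure P μ) :
    μ ≪ ℓ ∨ μ ⟂ₘ ℓ := by
  have hμ := μ.haveLebesgueDecomposition_add ℓ
  set σ := μ.singularPart ℓ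
  set α := ℓ.withDensity (μ.rnDeriv ℓ)
  have hσ : σ ⟂ₘ ℓ := μ.mutuallySingular_singularPart ℓ
  have hα : α ≪ ℓ := withDensity_absolutelyContinuous ℓ _
  obtain ⟨hσinv, hαinv⟩ :=
    IsInvariantMeasure.of_add_of_mutuallySingular hPmeas hPadd hPuniv hnull (hμ ▸ hinv) hσ hα
  rcases eq_or_ne σ 0 with hσ0 | hσ0
  · exact .inl (by rw [hμ, hσ0, zero_add]; exact hα)
  rcases eq_or_ne α 0 with hα0 | hα0
  · exact .inr (by rw [hμ, hα0, add_zero]; exact hσ)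
  have : NeZero σ := ⟨hσ0⟩
  have hsing : (σ univ)⁻¹ • σ ⟂ₘ (σ univ)⁻¹ • σ := by
    nth_rewrite 2 [hext.smul_inv_eq hμ hσinv hαinv hσ0 hα0]
    exact (((hσ.mono_ac .rfl hα).smul _).symm.smul _).symm
  exact absurd ((Measure.MutuallySingular.self_iff _).mp hsing)
    (IsProbabilityMeasure.ne_zero _)

end Invariant

section MeasureProd

variable {α β : Type*} [MeasurableSpace α] [MeasurableSpace β] {μ : Measure α} {ν : Measure β}
  [SFinite ν]

theorem measure_preimage_prodMk_right_eq_zero {A : Set (α × β)} (hA : (μ.prod ν) A = 0) {j : β}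
    (hj : ν {j} ≠ 0) : μ ((·, j) ⁻¹' A) = 0 := by
  have h := measure_mono_null (s := ((·, j) ⁻¹' A) ×ˢ {j})
    (fun x hx => by rw [← Prod.mk.eta (p := x), mem_singleton_iff.mp hx.2]; exact hx.1) hA
  rw [Measure.prod_prod] at h
  exact (mul_eq_zero.mp h).resolve_right hj

theorem ae_prod_of_forall_ae_prodMk_right [Countable β] {q : α × β → Prop}
    (h : ∀ j, ∀ᵐ y ∂μ, q (y, j)) : ∀ᵐ x ∂μ.prod ν, q x := by
  have hM := ae_iff.mp (ae_all_iff.mpr h)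
  refine ae_iff.mpr <| measure_mono_null (t := {y | ¬∀ j, q (y, j)} ×ˢ univ)
    (fun x hx => mem_prod.mpr ⟨fun hall => hx (hall x.2), mem_univ x.2⟩)
    ((Measure.prod_prod _ univ).trans (by rw [hM, zero_mul]))

end MeasureProd

theorem lintegral_Ioi_exponential_density {Λ : ℝ} (hΛ : 0 < Λ) :
    ∫⁻ t in Ioi 0, ENNReal.ofReal (Λ * Real.exp (-(Λ * t))) = 1 := by
  have h := lintegral_add_compl (μ := volume) (exponentialPDF Λ) (measurableSet_Iio (a := 0))
  rw [lintegral_exponentialPDF_of_nonpos le_rfl, zero_add, compl_Iio,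
    lintegral_exponentialPDF_eq_one hΛ] at h
  rw [← h, ← setLIntegral_congr Ioi_ae_eq_Ici]
  exact setLIntegral_congr_fun measurableSet_Ioi fun t ht => (exponentialPDF_of_nonneg ht.le).symm

theorem lintegral_ofReal_eq_one {Θ : Type*} [MeasurableSpace Θ] {ϑ : Measure Θ} {f : Θ → ℝ}
    (hf : 0 ≤ f) (hint : ∫ θ, f θ ∂ϑ = 1) : ∫⁻ θ, ENNReal.ofReal (f θ) ∂ϑ = 1 := by
  have hfi : Integrable f ϑ := by
    by_contra h
    rw [integral_undef h] at hint
    exact zero_ne_one hint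
  rw [← ofReal_integral_eq_lintegral_ofReal hfi (ae_of_all _ hf), hint, ENNReal.ofReal_one]

section Ptrans

variable {Y I' Θ : Type*} [MeasurableSpace Y] {Λ : ℝ} {S : I' → ℝ → Y → Y} {w : Θ → Y → Y}
  {p : Θ → Y → ℝ} {π' : I' → I' → Y → ℝ}

/- The integrand of `Ptrans`, with its arguments grouped as `((y, θ), t)` so that the iterated
integrals in `Ptrans` are integrals of sections of one function on a product space. -/
variable (Λ S w p π') in
def ptransIntegrand (A : Set (Y × I')) (i j : I') (q : (Y × Θ) × ℝ) : ℝ≥0∞ :=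
  ENNReal.ofReal (Λ * Real.exp (-(Λ * q.2))) *
    Set.indicator A (fun _ => (1:ℝ≥0∞)) (w q.1.2 (S i q.2 q.1.1), j) *
    ENNReal.ofReal (π' i j (w q.1.2 (S i q.2 q.1.1))) *
    ENNReal.ofReal (p q.1.2 (S i q.2 q.1.1))

theorem lintegral_ptransIntegrand_eq_zero {ν : Measure Y} {A : Set (Y × I')} {i j : I'} {θ : Θ}
    {t : ℝ} (hqmp : Measure.QuasiMeasurePreserving (fun y => w θ (S i t y)) ν ν)
    (hA : ν ((·, j) ⁻¹' A) = 0) :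
    ∫⁻ y, ptransIntegrand Λ S w p π' A i j ((y, θ), t) ∂ν = 0 := by
  have hzero : ∀ᵐ y ∂ν, ptransIntegrand Λ S w p π' A i j ((y, θ), t) = 0 := by
    filter_upwards [measure_eq_zero_iff_ae_notMem.mp (hqmp.preimage_null hA)] with y hy
    simp [ptransIntegrand, indicator_of_notMem (show (w θ (S i t y), j) ∉ A from hy)]
  exact (lintegral_congr_ae hzero).trans lintegral_zero

variable [MeasurableSpace Θ] {ϑ : Measure Θ}

theorem measurable_ptransIntegrand [MeasurableSpace I']
    (hS_meas : ∀ i, Measurable (fun q : ℝ × Y => S i q.1 q.2))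
    (hw_meas : Measurable (fun q : Θ × Y => w q.1 q.2))
    (hp_meas : Measurable (fun q : Θ × Y => p q.1 q.2))
    (hπ_meas : ∀ i j, Measurable (π' i j)) {A : Set (Y × I')} (hA : MeasurableSet A) (i j : I') :
    Measurable (ptransIntegrand Λ S w p π' A i j) := by
  have hS : Measurable fun q : (Y × Θ) × ℝ => S i q.2 q.1.1 :=
    (hS_meas i).comp (measurable_snd.prodMk (measurable_fst.comp measurable_fst))
  have hw : Measurable fun q : (Y × Θ) × ℝ => w q.1.2 (S i q.2 q.1.1) :=
    hw_meas.comp ((measurable_snd.comp measurable_fst).prodMk hS)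
  have hp : Measurable fun q : (Y × Θ) × ℝ => p q.1.2 (S i q.2 q.1.1) :=
    hp_meas.comp ((measurable_snd.comp measurable_fst).prodMk hS)
  unfold ptransIntegrand
  refine Measurable.mul (Measurable.mul (Measurable.mul ?_ ?_) ?_) ?_
  · fun_prop
  · exact (measurable_one.indicator hA).comp (hw.prodMk measurable_const)
  · exact ENNReal.measurable_ofReal.comp ((hπ_meas i j).comp hw)
  · exact ENNReal.measurable_ofReal.comp hp

variable [Fintype I']

theorem Ptrans_eq_sum_lintegral (x : Y × I') (A : Set (Y × I')) :
    Ptrans ϑ Λ S w p π' x A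
      = ∑ j, ∫⁻ θ, (∫⁻ t in Ioi 0, ptransIntegrand Λ S w p π' A x.2 j ((x.1, θ), t)) ∂ϑ :=
  rfl

theorem measurable_Ptrans [SFinite ϑ] [MeasurableSpace I'] [MeasurableSingletonClass I']
    {A : Set (Y × I')}
    (hmeas : ∀ i j, Measurable (ptransIntegrand Λ S w p π' A i j)) :
    Measurable fun x => Ptrans ϑ Λ S w p π' x A := by
  refine measurable_from_prod_countable_left fun i => ?_
  simp only [Ptrans_eq_sum_lintegral]
  exact Finset.measurable_sum _ fun j _ => (hmeas i j).lintegral_prod_right'.lintegral_prod_right'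

theorem Ptrans_union [SFinite ϑ] {A B : Set (Y × I')}
    (hmeas : ∀ i j, Measurable (ptransIntegrand Λ S w p π' A i j)) (hAB : Disjoint A B)
    (x : Y × I') :
    Ptrans ϑ Λ S w p π' x (A ∪ B) = Ptrans ϑ Λ S w p π' x A + Ptrans ϑ Λ S w p π' x B := by
  simp only [Ptrans_eq_sum_lintegral, ← Finset.sum_add_distrib]
  refine Finset.sum_congr rfl fun j _ => ?_
  have hadd : ∀ q, ptransIntegrand Λ S w p π' (A ∪ B) x.2 j q
      = ptransIntegrand Λ S w p π' A x.2 j q + ptransIntegrand Λ S w p π' B x.2 j q := by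
    intro q
    simp only [ptransIntegrand, indicator_union_of_disjoint hAB]
    ring
  simp_rw [hadd]
  refine (lintegral_congr fun θ =>
    lintegral_add_left ((hmeas x.2 j).comp measurable_prodMk_left) _).trans ?_
  exact lintegral_add_left ((hmeas x.2 j).lintegral_prod_right'.comp measurable_prodMk_left) _

theorem Ptrans_univ [SFinite ϑ] (hΛ : 0 < Λ) (hp_nonneg : ∀ θ y, 0 ≤ p θ y)
    (hp_int : ∀ y, ∫ θ, p θ y ∂ϑ = 1) (hπ_nonneg : ∀ i j y, 0 ≤ π' i j y)
    (hπ_sum : ∀ i y, ∑ j, π' i j y = 1)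
    (hmeas : ∀ i j, Measurable (ptransIntegrand Λ S w p π' univ i j)) (x : Y × I') :
    Ptrans ϑ Λ S w p π' x univ = 1 := by
  obtain ⟨y, i⟩ := x
  have hsum : ∀ q, ∑ j, ptransIntegrand Λ S w p π' univ i j q
      = ENNReal.ofReal (Λ * Real.exp (-(Λ * q.2))) * ENNReal.ofReal (p q.1.2 (S i q.2 q.1.1)) := by
    intro q
    have hj : ∀ j, ptransIntegrand Λ S w p π' univ i j q
        = ENNReal.ofReal (Λ * Real.exp (-(Λ * q.2))) * ENNReal.ofReal (p q.1.2 (S i q.2 q.1.1)) *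
          ENNReal.ofReal (π' i j (w q.1.2 (S i q.2 q.1.1))) := fun j => by
      simp only [ptransIntegrand, indicator_univ]
      ring
    rw [Finset.sum_congr rfl fun j _ => hj j, ← Finset.mul_sum,
      ← ENNReal.ofReal_sum_of_nonneg fun j _ => hπ_nonneg i j _, hπ_sum, ENNReal.ofReal_one,
      mul_one]
  have hmeas' : ∀ j, Measurable fun q : Θ × ℝ =>
      ptransIntegrand Λ S w p π' univ i j ((y, q.1), q.2) :=
    fun j => (hmeas i j).comp ((measurable_const.prodMk measurable_fst).prodMk measurable_snd)
  have hmeasθ : ∀ t j, Measurable fun θ => ptransIntegrand Λ S w p π' univ i j ((y, θ), t) :=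
    fun t j => (hmeas i j).comp ((measurable_const.prodMk measurable_id).prodMk measurable_const)
  rw [Ptrans_eq_sum_lintegral]
  calc ∑ j, ∫⁻ θ, (∫⁻ t in Ioi 0, ptransIntegrand Λ S w p π' univ i j ((y, θ), t)) ∂ϑ
      = ∑ j, ∫⁻ t in Ioi 0, ∫⁻ θ, ptransIntegrand Λ S w p π' univ i j ((y, θ), t) ∂ϑ :=
        Finset.sum_congr rfl fun j _ => lintegral_lintegral_swap (hmeas' j).aemeasurable
    _ = ∫⁻ t in Ioi 0, ∑ j, ∫⁻ θ, ptransIntegrand Λ S w p π' univ i j ((y, θ), t) ∂ϑ :=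
        (lintegral_finsetSum _ fun j _ => (hmeas' j).lintegral_prod_left').symm
    _ = ∫⁻ t in Ioi 0, ∫⁻ θ, ENNReal.ofReal (Λ * Real.exp (-(Λ * t))) *
          ENNReal.ofReal (p θ (S i t y)) ∂ϑ := by
        refine lintegral_congr fun t => ?_
        rw [← lintegral_finsetSum _ fun j _ => hmeasθ t j]
        exact lintegral_congr fun θ => hsum ((y, θ), t)
    _ = ∫⁻ t in Ioi 0, ENNReal.ofReal (Λ * Real.exp (-(Λ * t))) := by
        refine lintegral_congr fun t => ?_
        rw [lintegral_const_mul' _ _ ENNReal.ofReal_ne_top,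
          lintegral_ofReal_eq_one (fun θ => hp_nonneg θ _) (hp_int _), mul_one]
    _ = 1 := lintegral_Ioi_exponential_density hΛ

theorem lintegral_Ptrans_eq_zero [SFinite ϑ] {ν : Measure Y} [SFinite ν] {A : Set (Y × I')}
    (hmeas : ∀ i j, Measurable (ptransIntegrand Λ S w p π' A i j))
    (hqmp : ∀ i θ, ∀ t > 0, Measure.QuasiMeasurePreserving (fun y => w θ (S i t y)) ν ν)
    (hA : ∀ j, ν ((·, j) ⁻¹' A) = 0) (i : I') :
    ∫⁻ y, Ptrans ϑ Λ S w p π' (y, i) A ∂ν = 0 := by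
  simp only [Ptrans_eq_sum_lintegral]
  rw [lintegral_finsetSum _ fun j _ => (hmeas i j).lintegral_prod_right'.lintegral_prod_right']
  refine Finset.sum_eq_zero fun j _ => ?_
  rw [lintegral_lintegral_swap (hmeas i j).lintegral_prod_right'.aemeasurable]
  refine (lintegral_congr fun θ => ?_).trans lintegral_zero
  have hyt : Measurable fun q : Y × ℝ => ptransIntegrand Λ S w p π' A i j ((q.1, θ), q.2) :=
    (hmeas i j).comp ((measurable_fst.prodMk measurable_const).prodMk measurable_snd)
  rw [lintegral_lintegral_swap hyt.aemeasurable]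
  exact (setLIntegral_congr_fun measurableSet_Ioi fun t ht =>
    lintegral_ptransIntegrand_eq_zero (hqmp i θ t ht) (hA j)).trans lintegral_zero

theorem ae_Ptrans_eq_zero [SFinite ϑ] [MeasurableSpace I'] [MeasurableSingletonClass I']
    {ν : Measure Y} [SFinite ν] {A : Set (Y × I')}
    (hmeas : ∀ i j, Measurable (ptransIntegrand Λ S w p π' A i j))
    (hqmp : ∀ i θ, ∀ t > 0, Measure.QuasiMeasurePreserving (fun y => w θ (S i t y)) ν ν)
    (hA : (ν.prod Measure.count) A = 0) :
    ∀ᵐ x ∂ν.prod Measure.count, Ptrans ϑ Λ S w p π' x A = 0 :=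
  ae_prod_of_forall_ae_prodMk_right fun i =>
    (lintegral_eq_zero_iff ((measurable_Ptrans hmeas).comp measurable_prodMk_right)).mp
      (lintegral_Ptrans_eq_zero hmeas hqmp
        (fun j => measure_preimage_prodMk_right_eq_zero hA (by simp)) i)

end Ptrans

theorem thm_4_3_i_general
    {d N : ℕ}
    {Θ : Type*} [MeasurableSpace Θ] (ϑ : Measure Θ) [IsFiniteMeasure ϑ]
    (Λ : ℝ) (hΛ : 0 < Λ)
    (S : Fin N → ℝ → EuclideanSpace ℝ (Fin d) → EuclideanSpace ℝ (Fin d))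
    (w : Θ → EuclideanSpace ℝ (Fin d) → EuclideanSpace ℝ (Fin d))
    (p : Θ → EuclideanSpace ℝ (Fin d) → ℝ)
    (π' : Fin N → Fin N → EuclideanSpace ℝ (Fin d) → ℝ)
    (hS_meas : ∀ i, Measurable (fun q : ℝ × EuclideanSpace ℝ (Fin d) => S i q.1 q.2))
    (hw_meas : Measurable (fun q : Θ × EuclideanSpace ℝ (Fin d) => w q.1 q.2))
    (hp_meas : Measurable (fun q : Θ × EuclideanSpace ℝ (Fin d) => p q.1 q.2))
    (hπ_meas : ∀ i j, Measurable (π' i j))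
    (hp_nonneg : ∀ θ y, 0 ≤ p θ y)
    (hp_int : ∀ y, ∫ θ, p θ y ∂ϑ = 1)
    (hπ_nonneg : ∀ i j y, 0 ≤ π' i j y)
    (hπ_sum : ∀ i y, ∑ j, π' i j y = 1)
    -- nonsingularity assumption
    (hw_ns : ∀ θ, (volume : Measure (EuclideanSpace ℝ (Fin d))).map (w θ) ≪ volume)
    (hS_ns : ∀ i, ∀ t : ℝ, 0 ≤ t →
      (volume : Measure (EuclideanSpace ℝ (Fin d))).map (S i t) ≪ volume)
    -- an ergodic (extreme) invariant probability measure of P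
    (μs : Measure (EuclideanSpace ℝ (Fin d) × Fin N)) [IsProbabilityMeasure μs]
    (hinv : ∀ A : Set (EuclideanSpace ℝ (Fin d) × Fin N), MeasurableSet A →
      (∫⁻ x, Ptrans ϑ Λ S w p π' x A ∂μs) = μs A)
    (hext : ∀ (ν₁ ν₂ : Measure (EuclideanSpace ℝ (Fin d) × Fin N)) (a : ℝ≥0∞),
      IsProbabilityMeasure ν₁ → IsProbabilityMeasure ν₂ →
      (∀ A, MeasurableSet A → (∫⁻ x, Ptrans ϑ Λ S w p π' x A ∂ν₁) = ν₁ A) →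
      (∀ A, MeasurableSet A → (∫⁻ x, Ptrans ϑ Λ S w p π' x A ∂ν₂) = ν₂ A) →
      0 < a → a < 1 → μs = a • ν₁ + (1 - a) • ν₂ → ν₁ = ν₂) :
    μs ≪ (volume : Measure (EuclideanSpace ℝ (Fin d))).prod Measure.count ∨
    μs.MutuallySingular
      ((volume : Measure (EuclideanSpace ℝ (Fin d))).prod Measure.count) := by
  have hmeas : ∀ A, MeasurableSet A → ∀ i j, Measurable (ptransIntegrand Λ S w p π' A i j) :=
    fun A hA => measurable_ptransIntegrand hS_meas hw_meas hp_meas hπ_meas hA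
  have hqmp : ∀ i θ, ∀ t > 0,
      Measure.QuasiMeasurePreserving (fun y => w θ (S i t y)) volume volume :=
    fun i θ t ht => (Measure.QuasiMeasurePreserving.mk hw_meas.of_uncurry_left (hw_ns θ)).comp
      ⟨(hS_meas i).of_uncurry_left, hS_ns i t ht.le⟩
  exact IsExtremeInvariantMeasure.absolutelyContinuous_or_mutuallySingular
    (fun A hA => measurable_Ptrans (hmeas A hA))
    (fun x A B hA _ hAB => Ptrans_union (hmeas A hA) hAB x)
    (fun x => (Ptrans_univ hΛ hp_nonneg hp_int hπ_nonneg hπ_sum (hmeas univ .univ) x).le)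
    (fun A hA hA0 => ae_Ptrans_eq_zero (hmeas A hA) hqmp hA0) hinv hext

/-- **Theorem 4.3(i).** Under the nonsingularity assumption, every ergodic (extreme) invariant
probability measure of the Markov operator `P` of the chain of post-jump locations is either
absolutely continuous or singular with respect to `ℓ̄ = volume ⊗ count`. -/
theorem thm_4_3_i
    {d N : ℕ} (hd : 0 < d) (hN : 0 < N)
    {Θ : Type*} [MeasurableSpace Θ] (ϑ : Measure Θ) [IsFiniteMeasure ϑ]
    (Λ : ℝ) (hΛ : 0 < Λ)
    (S : Fin N → ℝ → EuclideanSpace ℝ (Fin d) → EuclideanSpace ℝ (Fin d))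
    (w : Θ → EuclideanSpace ℝ (Fin d) → EuclideanSpace ℝ (Fin d))
    (p : Θ → EuclideanSpace ℝ (Fin d) → ℝ)
    (π' : Fin N → Fin N → EuclideanSpace ℝ (Fin d) → ℝ)
    (hS_meas : ∀ i, Measurable (fun q : ℝ × EuclideanSpace ℝ (Fin d) => S i q.1 q.2))
    (hw_meas : Measurable (fun q : Θ × EuclideanSpace ℝ (Fin d) => w q.1 q.2))
    (hp_meas : Measurable (fun q : Θ × EuclideanSpace ℝ (Fin d) => p q.1 q.2))
    (hπ_meas : ∀ i j, Measurable (π' i j))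
    (hp_nonneg : ∀ θ y, 0 ≤ p θ y)
    (hp_int : ∀ y, ∫ θ, p θ y ∂ϑ = 1)
    (hπ_nonneg : ∀ i j y, 0 ≤ π' i j y)
    (hπ_sum : ∀ i y, ∑ j, π' i j y = 1)
    -- nonsingularity assumption
    (hw_ns : ∀ θ, (volume : Measure (EuclideanSpace ℝ (Fin d))).map (w θ) ≪ volume)
    (hS_ns : ∀ i, ∀ t : ℝ, 0 ≤ t →
      (volume : Measure (EuclideanSpace ℝ (Fin d))).map (S i t) ≪ volume)
    -- an ergodic (extreme) invariant probability measure of P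
    (μs : Measure (EuclideanSpace ℝ (Fin d) × Fin N)) [IsProbabilityMeasure μs]
    (hinv : ∀ A : Set (EuclideanSpace ℝ (Fin d) × Fin N), MeasurableSet A →
      (∫⁻ x, Ptrans ϑ Λ S w p π' x A ∂μs) = μs A)
    (hext : ∀ (ν₁ ν₂ : Measure (EuclideanSpace ℝ (Fin d) × Fin N)) (a : ℝ≥0∞),
      IsProbabilityMeasure ν₁ → IsProbabilityMeasure ν₂ →
      (∀ A, MeasurableSet A → (∫⁻ x, Ptrans ϑ Λ S w p π' x A ∂ν₁) = ν₁ A) →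
      (∀ A, MeasurableSet A → (∫⁻ x, Ptrans ϑ Λ S w p π' x A ∂ν₂) = ν₂ A) →
      0 < a → a < 1 → μs = a • ν₁ + (1 - a) • ν₂ → ν₁ = ν₂) :
    μs ≪ (volume : Measure (EuclideanSpace ℝ (Fin d))).prod Measure.count ∨
    μs.MutuallySingular
      ((volume : Measure (EuclideanSpace ℝ (Fin d))).prod Measure.count) :=
  thm_4_3_i_general ϑ Λ hΛ S w p π' hS_meas hw_meas hp_meas hπ_meas hp_nonneg hp_int hπ_nonneg
    hπ_sum hw_ns hS_ns μs hinv hext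
end
end

section
/- Theorem 4.3(ii). Assume the nonsingularity assumption. Let μ* and ν* be probability measures on X such that Pμ* = μ*, ν* = Gμ* and μ* = Wν* (the correspondence between invariant measures of the discrete-time chain and of the continuous-time semigroup). Then μ* is absolutely continuous with respect to ℓ̄ if and only if ν* is absolutely continuous with respect to ℓ̄. -/
open MeasureTheory ENNReal ProbabilityTheory Filter

noncomputable section

/-- The kernel `G` (deterministic flow until an exponential time, no jump). -/
def Gtrans {Y I' : Type*} [MeasurableSpace Y] (Λ : ℝ) (S : I' → ℝ → Y → Y)
    (x : Y × I') (A : Set (Y × I')) : ℝ≥0∞ :=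
  ∫⁻ t in Set.Ioi (0:ℝ),
    ENNReal.ofReal (Λ * Real.exp (-(Λ*t))) *
    Set.indicator A (fun _ => (1:ℝ≥0∞)) (S x.2 t x.1, x.2)

/-- The kernel `W` (a single jump together with the switch of the semiflow index). -/
def Wtrans {Y I' Θ : Type*} [MeasurableSpace Y] [Fintype I'] [MeasurableSpace Θ]
    (ϑ : Measure Θ) (w : Θ → Y → Y) (p : Θ → Y → ℝ) (π' : I' → I' → Y → ℝ)
    (x : Y × I') (A : Set (Y × I')) : ℝ≥0∞ :=
  ∑ j : I', ∫⁻ θ,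
      Set.indicator A (fun _ => (1:ℝ≥0∞)) (w θ x.1, j) *
      ENNReal.ofReal (π' x.2 j (w θ x.1)) *
      ENNReal.ofReal (p θ x.1) ∂ϑ

/-!
Both kernels move mass only along nonsingular maps: `G` along the flows `S i t`, `W` along the
jumps `w θ` (followed by a switch of the discrete coordinate). Hence each of these maps pulls an
`ℓ̄`-null set `A` back to an `ℓ̄`-null set, and Tonelli's theorem shows that `G x A`, respectively
`W x A`, vanishes for almost every `x` as soon as the starting measure is absolutely continuous.
Integrating gives `Gμ* ≪ ℓ̄` from `μ* ≪ ℓ̄` and `Wν* ≪ ℓ̄` from `ν* ≪ ℓ̄`.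
-/

open Measure Set

section General

variable {α β : Type*} [MeasurableSpace α] [MeasurableSpace β]

theorem prod_count_apply_eq_zero_iff [Countable β] [MeasurableSingletonClass β]
    {μ : Measure α} [SFinite μ] {s : Set (α × β)} (hs : MeasurableSet s) :
    μ.prod count s = 0 ↔ ∀ i, μ {y | (y, i) ∈ s} = 0 := by
  rw [prod_apply_symm hs, lintegral_count, ENNReal.tsum_eq_zero]
  rfl

theorem quasiMeasurePreserving_prod_count [Countable β] [DiscreteMeasurableSpace β]
    {μ : Measure α} [SFinite μ] {T : β → α → α}
    (hT : ∀ i, QuasiMeasurePreserving (T i) μ μ) (k : β → β) :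
    QuasiMeasurePreserving (fun x : α × β => (T x.2 x.1, k x.2)) (μ.prod count)
      (μ.prod count) := by
  have hmeas : Measurable (fun x : α × β => (T x.2 x.1, k x.2)) :=
    measurable_from_prod_countable_left fun i =>
      (hT i).measurable.prodMk (measurable_const (a := k i))
  refine ⟨hmeas, AbsolutelyContinuous.mk fun A hA hA0 => ?_⟩
  rw [map_apply hmeas hA, prod_count_apply_eq_zero_iff (hmeas hA)]
  exact fun i => (hT i).preimage_null ((prod_count_apply_eq_zero_iff hA).1 hA0 (k i))

theorem ae_ae_notMem_of_ae_measure_section_eq_zero {μ : Measure α} {ν : Measure β}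
    [SFinite μ] [SFinite ν] {E : Set (α × β)} (hE : MeasurableSet E)
    (h : ∀ᵐ y ∂ν, μ {x | (x, y) ∈ E} = 0) :
    ∀ᵐ x ∂μ, ∀ᵐ y ∂ν, (x, y) ∉ E := by
  refine ae_ae_of_ae_prod (measure_eq_zero_iff_ae_notMem.1 ?_)
  rw [prod_apply_symm hE]
  exact lintegral_eq_zero_of_ae_eq_zero h

theorem absolutelyContinuous_of_eq_lintegral {μ : Measure β} {ν ρ : Measure α}
    {κ : β → Set α → ℝ≥0∞}
    (hν : ∀ A, MeasurableSet A → ν A = ∫⁻ x, κ x A ∂μ)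
    (hκ : ∀ A, MeasurableSet A → ρ A = 0 → ∀ᵐ x ∂μ, κ x A = 0) : ν ≪ ρ :=
  AbsolutelyContinuous.mk fun A hA hA0 => by
    rw [hν A hA]
    exact lintegral_eq_zero_of_ae_eq_zero (hκ A hA hA0)

end General

section Kernels

variable {Y I : Type*} [MeasurableSpace Y] [MeasurableSpace I] [Countable I]
  [DiscreteMeasurableSpace I] {ρ : Measure Y} [SFinite ρ]
  {A : Set (Y × I)}

theorem ae_Gtrans_eq_zero {Λ : ℝ} {S : I → ℝ → Y → Y}
    (hS_meas : ∀ i, Measurable (fun q : ℝ × Y => S i q.1 q.2))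
    (hS : ∀ i, ∀ t : ℝ, 0 < t → QuasiMeasurePreserving (S i t) ρ ρ)
    {μ : Measure (Y × I)} [SFinite μ] (hμ : μ ≪ ρ.prod count)
    (hA : MeasurableSet A) (hA0 : ρ.prod count A = 0) :
    ∀ᵐ x ∂μ, Gtrans Λ S x A = 0 := by
  have hflow : Measurable (fun z : (Y × ℝ) × I => S z.2 z.1.2 z.1.1) :=
    measurable_from_prod_countable_left fun i =>
      (hS_meas i).comp (measurable_snd.prodMk measurable_fst)
  have hE : MeasurableSet {z : (Y × I) × ℝ | (S z.1.2 z.2 z.1.1, z.1.2) ∈ A} :=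
    ((hflow.comp ((measurable_fst.fst.prodMk measurable_snd).prodMk measurable_fst.snd)).prodMk
      measurable_fst.snd) hA
  have hsec : ∀ᵐ t ∂volume.restrict (Ioi 0),
      μ {x | (S x.2 t x.1, x.2) ∈ A} = 0 :=
    ae_restrict_of_forall_mem measurableSet_Ioi fun t ht =>
      hμ ((quasiMeasurePreserving_prod_count (fun i => hS i t ht) id).preimage_null hA0)
  filter_upwards [ae_ae_notMem_of_ae_measure_section_eq_zero hE hsec] with x hx
  refine lintegral_eq_zero_of_ae_eq_zero ?_
  filter_upwards [hx] with t ht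
  simp [indicator_of_notMem ht]

theorem ae_Wtrans_eq_zero [Fintype I] {Θ : Type*} [MeasurableSpace Θ] {ϑ : Measure Θ}
    [SFinite ϑ] {w : Θ → Y → Y} {p : Θ → Y → ℝ} {π' : I → I → Y → ℝ}
    (hw_meas : Measurable (fun q : Θ × Y => w q.1 q.2))
    (hw : ∀ θ, QuasiMeasurePreserving (w θ) ρ ρ)
    {ν : Measure (Y × I)} [SFinite ν] (hν : ν ≪ ρ.prod count)
    (hA : MeasurableSet A) (hA0 : ρ.prod count A = 0) :
    ∀ᵐ x ∂ν, Wtrans ϑ w p π' x A = 0 := by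
  have hjump : ∀ j : I, MeasurableSet {z : (Y × I) × Θ | (w z.2 z.1.1, j) ∈ A} := fun j =>
    ((hw_meas.comp (measurable_snd.prodMk measurable_fst.fst)).prodMk measurable_const) hA
  have hsec : ∀ j : I, ∀ᵐ x ∂ν, ∀ᵐ θ ∂ϑ, (w θ x.1, j) ∉ A :=
    fun j => ae_ae_notMem_of_ae_measure_section_eq_zero (hjump j) (Eventually.of_forall
      fun θ => hν ((quasiMeasurePreserving_prod_count (fun _ => hw θ) fun _ => j).preimage_null
        hA0))
  filter_upwards [ae_all_iff.2 hsec] with x hx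
  refine Finset.sum_eq_zero fun j _ => lintegral_eq_zero_of_ae_eq_zero ?_
  filter_upwards [hx j] with θ hθ
  simp [indicator_of_notMem hθ]

end Kernels

theorem thm_4_3_ii_general
    {d N : ℕ}
    {Θ : Type*} [MeasurableSpace Θ] (ϑ : Measure Θ) [IsFiniteMeasure ϑ]
    (Λ : ℝ)
    (S : Fin N → ℝ → EuclideanSpace ℝ (Fin d) → EuclideanSpace ℝ (Fin d))
    (w : Θ → EuclideanSpace ℝ (Fin d) → EuclideanSpace ℝ (Fin d))
    (p : Θ → EuclideanSpace ℝ (Fin d) → ℝ)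
    (π' : Fin N → Fin N → EuclideanSpace ℝ (Fin d) → ℝ)
    (hS_meas : ∀ i, Measurable (fun q : ℝ × EuclideanSpace ℝ (Fin d) => S i q.1 q.2))
    (hw_meas : Measurable (fun q : Θ × EuclideanSpace ℝ (Fin d) => w q.1 q.2))
    -- nonsingularity assumption
    (hw_ns : ∀ θ, (volume : Measure (EuclideanSpace ℝ (Fin d))).map (w θ) ≪ volume)
    (hS_ns : ∀ i, ∀ t : ℝ, 0 ≤ t →
      (volume : Measure (EuclideanSpace ℝ (Fin d))).map (S i t) ≪ volume)
    -- corresponding invariant measures of P and of the semigroup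
    (μs νs : Measure (EuclideanSpace ℝ (Fin d) × Fin N))
    [IsProbabilityMeasure μs] [IsProbabilityMeasure νs]
    (hG : ∀ A : Set (EuclideanSpace ℝ (Fin d) × Fin N), MeasurableSet A →
      νs A = ∫⁻ x, Gtrans Λ S x A ∂μs)
    (hW : ∀ A : Set (EuclideanSpace ℝ (Fin d) × Fin N), MeasurableSet A →
      μs A = ∫⁻ x, Wtrans ϑ w p π' x A ∂νs) :
    μs ≪ (volume : Measure (EuclideanSpace ℝ (Fin d))).prod Measure.count ↔
    νs ≪ (volume : Measure (EuclideanSpace ℝ (Fin d))).prod Measure.count := by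
  have hS_qmp : ∀ i, ∀ t : ℝ, 0 < t →
      QuasiMeasurePreserving (S i t) (volume : Measure (EuclideanSpace ℝ (Fin d))) volume :=
    fun i t ht => ⟨(hS_meas i).comp measurable_prodMk_left, hS_ns i t ht.le⟩
  have hw_qmp : ∀ θ,
      QuasiMeasurePreserving (w θ) (volume : Measure (EuclideanSpace ℝ (Fin d))) volume :=
    fun θ => ⟨hw_meas.comp measurable_prodMk_left, hw_ns θ⟩
  exact ⟨fun hμ => absolutelyContinuous_of_eq_lintegral hG fun _ hA hA0 =>
      ae_Gtrans_eq_zero hS_meas hS_qmp hμ hA hA0,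
    fun hν => absolutelyContinuous_of_eq_lintegral hW fun _ hA hA0 =>
      ae_Wtrans_eq_zero hw_meas hw_qmp hν hA hA0⟩

/-- **Theorem 4.3(ii).** Under the nonsingularity assumption, if `μ*` is a `P`-invariant
probability measure and `ν* = Gμ*`, `μ* = Wν*` is the corresponding invariant measure of the
continuous-time semigroup, then `μ*` is absolutely continuous w.r.t. `ℓ̄` iff `ν*` is. -/
theorem thm_4_3_ii
    {d N : ℕ} (hd : 0 < d) (hN : 0 < N)
    {Θ : Type*} [MeasurableSpace Θ] (ϑ : Measure Θ) [IsFiniteMeasure ϑ]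
    (Λ : ℝ) (hΛ : 0 < Λ)
    (S : Fin N → ℝ → EuclideanSpace ℝ (Fin d) → EuclideanSpace ℝ (Fin d))
    (w : Θ → EuclideanSpace ℝ (Fin d) → EuclideanSpace ℝ (Fin d))
    (p : Θ → EuclideanSpace ℝ (Fin d) → ℝ)
    (π' : Fin N → Fin N → EuclideanSpace ℝ (Fin d) → ℝ)
    (hS_meas : ∀ i, Measurable (fun q : ℝ × EuclideanSpace ℝ (Fin d) => S i q.1 q.2))
    (hw_meas : Measurable (fun q : Θ × EuclideanSpace ℝ (Fin d) => w q.1 q.2))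
    (hp_meas : Measurable (fun q : Θ × EuclideanSpace ℝ (Fin d) => p q.1 q.2))
    (hπ_meas : ∀ i j, Measurable (π' i j))
    (hp_nonneg : ∀ θ y, 0 ≤ p θ y)
    (hp_int : ∀ y, ∫ θ, p θ y ∂ϑ = 1)
    (hπ_nonneg : ∀ i j y, 0 ≤ π' i j y)
    (hπ_sum : ∀ i y, ∑ j, π' i j y = 1)
    -- nonsingularity assumption
    (hw_ns : ∀ θ, (volume : Measure (EuclideanSpace ℝ (Fin d))).map (w θ) ≪ volume)
    (hS_ns : ∀ i, ∀ t : ℝ, 0 ≤ t →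
      (volume : Measure (EuclideanSpace ℝ (Fin d))).map (S i t) ≪ volume)
    -- corresponding invariant measures of P and of the semigroup
    (μs νs : Measure (EuclideanSpace ℝ (Fin d) × Fin N))
    [IsProbabilityMeasure μs] [IsProbabilityMeasure νs]
    (hinv : ∀ A : Set (EuclideanSpace ℝ (Fin d) × Fin N), MeasurableSet A →
      (∫⁻ x, Ptrans ϑ Λ S w p π' x A ∂μs) = μs A)
    (hG : ∀ A : Set (EuclideanSpace ℝ (Fin d) × Fin N), MeasurableSet A →
      νs A = ∫⁻ x, Gtrans Λ S x A ∂μs)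
    (hW : ∀ A : Set (EuclideanSpace ℝ (Fin d) × Fin N), MeasurableSet A →
      μs A = ∫⁻ x, Wtrans ϑ w p π' x A ∂νs) :
    μs ≪ (volume : Measure (EuclideanSpace ℝ (Fin d))).prod Measure.count ↔
    νs ≪ (volume : Measure (EuclideanSpace ℝ (Fin d))).prod Measure.count :=
  thm_4_3_ii_general ϑ Λ S w p π' hS_meas hw_meas hw_ns hS_ns μs νs hG hW
end
end

section
/- Proposition 4.4. Let κ be the Markov kernel of the model and μ* a probability measure on X with μ*.bind κ = μ*. Suppose there exist open sets U, V ⊆ Y, an index i ∈ I, n ≥ 1 and c̄ > 0 such that for every y ∈ U, every j ∈ I and every measurable B ⊆ Y one has κⁿ (y,i) (B ×ˢ {j}) ≥ c̄ * volume (B ∩ V). Suppose further that there exist a measurable set X̃ ⊆ X with μ* X̃ > 0, m ≥ 1 and δ > 0 such that κᵐ x (U ×ˢ {i}) ≥ δ for every x ∈ X̃. Then μ* (B ×ˢ {j}) ≥ c̄ * δ * μ* X̃ * volume (B ∩ V) for every measurable B ⊆ Y and every j ∈ I; in particular, if V is nonempty, the absolutely continuous part of μ* with respect to ℓ̄ is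 nonzero, i.e. μ*.singularPart ℓ̄ ≠ μ*. -/
/-!
Invariance of `μ*` under `κ` gives `μ* = μ*.bind (κ ^ k)` for every `k`, so a lower bound
`c ≤ (κ ^ k) x A` valid on a set `C` integrates to `c * μ* C ≤ μ* A`. Used once with the
accessibility bound (`k = m`, `C = X̃`) and once with the smallness bound (`k = n`, `C = U × {i}`),
this gives the fibrewise domination `c̄ δ μ*(X̃) ℓ_d|_V ≤ μ*(· × {j})`. A measure dominating a
nonzero multiple of `ℓ_d|_V` on one fibre cannot be singular to `ℓ_d ⊗ count`, since that
multiple is absolutely continuous with respect to `ℓ_d`.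
-/

open MeasureTheory ENNReal ProbabilityTheory Filter

noncomputable section

namespace ProbabilityTheory.Kernel

variable {α : Type*} [MeasurableSpace α]

lemma iterate_bind_eq_bind_pow (κ : Kernel α α) (k : ℕ) (μ : Measure α) :
    (fun ν : Measure α => ν.bind κ)^[k] μ = μ.bind ⇑(κ ^ k) := by
  induction k with
  | zero => exact Measure.id_comp.symm
  | succ k ih =>
    rw [Function.iterate_succ_apply', ih, pow_succ', Measure.bind_bind (κ ^ k).aemeasurable
      κ.aemeasurable]
    rfl

lemma iterate_bind_dirac (κ : Kernel α α) (k : ℕ) (x : α) :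
    (fun ν : Measure α => ν.bind κ)^[k] (Measure.dirac x) = (κ ^ k) x := by
  rw [iterate_bind_eq_bind_pow, Measure.dirac_bind (κ ^ k).measurable]

lemma bind_pow_eq_self {κ : Kernel α α} {μ : Measure α} (hμ : μ.bind κ = μ) (k : ℕ) :
    μ.bind ⇑(κ ^ k) = μ := by
  rw [← iterate_bind_eq_bind_pow]
  exact Function.iterate_fixed hμ k

lemma mul_measure_le_of_bind_eq_self {η : Kernel α α} {μ : Measure α} (hμ : μ.bind η = μ)
    {C A : Set α} (hA : MeasurableSet A) {c : ℝ≥0∞} (hc : ∀ x ∈ C, c ≤ η x A) :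
    c * μ C ≤ μ A :=
  calc c * μ C = ∫⁻ _ in C, c ∂μ := (MeasureTheory.setLIntegral_const C c).symm
    _ ≤ ∫⁻ x in C, η x A ∂μ := setLIntegral_mono (η.measurable_coe hA) hc
    _ ≤ ∫⁻ x, η x A ∂μ := setLIntegral_le_lintegral C _
    _ = μ A := by rw [← Measure.bind_apply hA η.aemeasurable, hμ]

end ProbabilityTheory.Kernel

namespace MeasureTheory.Measure

lemma singularPart_prod_ne_self_of_le_fibre {Y I : Type*} [MeasurableSpace Y]
    [MeasurableSpace I] {μ : Measure (Y × I)} {ℓ ν : Measure Y}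
    {ρ : Measure I} [SFinite ρ] {i : I} (hρi : ρ {i} ≠ 0) (hνℓ : ν ≪ ℓ) (hν : ν ≠ 0)
    (hle : ∀ B, MeasurableSet B → ν B ≤ μ (B ×ˢ {i})) :
    μ.singularPart (ℓ.prod ρ) ≠ μ := by
  intro hμ
  obtain ⟨T, hT, hμT, hT_compl⟩ := hμ ▸ mutuallySingular_singularPart μ (ℓ.prod ρ)
  set B₀ : Set Y := (fun y => (y, i)) ⁻¹' T
  have hνB₀ : ν B₀ = 0 := by
    refine le_antisymm ?_ zero_le
    calc ν B₀ ≤ μ (B₀ ×ˢ {i}) := hle B₀ (measurable_prodMk_right hT)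
      _ ≤ μ T := measure_mono (by rintro ⟨y, j⟩ ⟨hy, rfl⟩; exact hy)
      _ = 0 := hμT
  have hℓB₀ : ℓ B₀ᶜ = 0 := by
    have h : ℓ B₀ᶜ * ρ {i} = 0 := by
      rw [← prod_prod]
      exact measure_mono_null (by rintro ⟨y, j⟩ ⟨hy, rfl⟩; exact hy) hT_compl
    simpa [hρi] using h
  exact hν (eq_zero_of_absolutelyContinuous_of_mutuallySingular hνℓ
    ⟨B₀, measurable_prodMk_right hT, hνB₀, hℓB₀⟩)

end MeasureTheory.Measure

open ProbabilityTheory.Kernel in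
theorem prop_4_4_general
    {d N : ℕ}
    -- the Markov kernel of the chain
    (κ : Kernel (EuclideanSpace ℝ (Fin d) × Fin N) (EuclideanSpace ℝ (Fin d) × Fin N))
    -- an invariant probability measure
    (μs : Measure (EuclideanSpace ℝ (Fin d) × Fin N))
    (hinv : μs.bind ⇑κ = μs)
    -- the small set hypothesis
    (U V : Set (EuclideanSpace ℝ (Fin d))) (hU : IsOpen U) (hV : IsOpen V)
    (i : Fin N) (n : ℕ) (cbar : ℝ) (hcbar : 0 < cbar)
    (hsmall : ∀ y ∈ U, ∀ j : Fin N, ∀ B : Set (EuclideanSpace ℝ (Fin d)), MeasurableSet B →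
      ENNReal.ofReal cbar * volume (B ∩ V) ≤
        ((fun ν : Measure (EuclideanSpace ℝ (Fin d) × Fin N) => ν.bind ⇑κ)^[n]
          (Measure.dirac (y, i))) (B ×ˢ ({j} : Set (Fin N))))
    -- the accessibility hypothesis
    (Xtld : Set (EuclideanSpace ℝ (Fin d) × Fin N))
    (hXtld_pos : 0 < μs Xtld) (m : ℕ) (δ : ℝ) (hδ : 0 < δ)
    (hacc : ∀ x ∈ Xtld,
      ENNReal.ofReal δ ≤
        ((fun ν : Measure (EuclideanSpace ℝ (Fin d) × Fin N) => ν.bind ⇑κ)^[m]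
          (Measure.dirac x)) (U ×ˢ ({i} : Set (Fin N)))) :
    (∀ B : Set (EuclideanSpace ℝ (Fin d)), MeasurableSet B → ∀ j : Fin N,
      ENNReal.ofReal cbar * ENNReal.ofReal δ * μs Xtld * volume (B ∩ V) ≤
        μs (B ×ˢ ({j} : Set (Fin N)))) ∧
    (V.Nonempty →
      μs.singularPart
        ((volume : Measure (EuclideanSpace ℝ (Fin d))).prod Measure.count) ≠ μs) := by
  have hUi : ENNReal.ofReal δ * μs Xtld ≤ μs (U ×ˢ {i}) :=
    mul_measure_le_of_bind_eq_self (bind_pow_eq_self hinv m)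
      (hU.measurableSet.prod (measurableSet_singleton i))
      fun x hx => by simpa only [iterate_bind_dirac] using hacc x hx
  have hfibre : ∀ B, MeasurableSet B → ∀ j : Fin N,
      ENNReal.ofReal cbar * ENNReal.ofReal δ * μs Xtld * volume (B ∩ V) ≤ μs (B ×ˢ {j}) := by
    intro B hB j
    calc _ = ENNReal.ofReal cbar * volume (B ∩ V) * (ENNReal.ofReal δ * μs Xtld) := by ring
      _ ≤ ENNReal.ofReal cbar * volume (B ∩ V) * μs (U ×ˢ {i}) := by gcongr
      _ ≤ μs (B ×ˢ {j}) :=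
        mul_measure_le_of_bind_eq_self (bind_pow_eq_self hinv n)
          (hB.prod (measurableSet_singleton j)) fun x ⟨hx, (hxi : x.2 = i)⟩ => by
            simpa only [← hxi, iterate_bind_dirac] using hsmall x.1 hx j B hB
  refine ⟨hfibre, fun hVne => ?_⟩
  have hc : ENNReal.ofReal cbar * ENNReal.ofReal δ * μs Xtld ≠ 0 := by
    simp [hcbar, hδ, hXtld_pos.ne']
  refine Measure.singularPart_prod_ne_self_of_le_fibre (i := i)
    (ν := (ENNReal.ofReal cbar * ENNReal.ofReal δ * μs Xtld) • volume.restrict V) (by simp)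
    (Measure.smul_absolutelyContinuous.trans Measure.restrict_le_self.absolutelyContinuous)
    (by simp [hc, (hV.measure_pos volume hVne).ne']) fun B hB => ?_
  simpa [Measure.restrict_apply hB, mul_assoc] using hfibre B hB i

/-- **Proposition 4.4.** If some open set `U ×ˢ {i}` is `(n, ℓ_d|_V)`-small and uniformly
accessible (in `m` steps, with probability `≥ δ`) from a set `X̃` of positive `μ*`-measure,
then the invariant measure `μ*` dominates a multiple of `ℓ_d|_V` on each fibre; in particular,
if `V ≠ ∅`, the absolutely continuous part of `μ*` w.r.t. `ℓ̄` is nontrivial. -/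
theorem prop_4_4
    {d N : ℕ} (hd : 0 < d) (hN : 0 < N)
    {Θ : Type*} [MeasurableSpace Θ] (ϑ : Measure Θ) [IsFiniteMeasure ϑ]
    (Λ : ℝ) (hΛ : 0 < Λ)
    (S : Fin N → ℝ → EuclideanSpace ℝ (Fin d) → EuclideanSpace ℝ (Fin d))
    (w : Θ → EuclideanSpace ℝ (Fin d) → EuclideanSpace ℝ (Fin d))
    (p : Θ → EuclideanSpace ℝ (Fin d) → ℝ)
    (π' : Fin N → Fin N → EuclideanSpace ℝ (Fin d) → ℝ)
    (hS_meas : ∀ i, Measurable (fun q : ℝ × EuclideanSpace ℝ (Fin d) => S i q.1 q.2))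
    (hw_meas : Measurable (fun q : Θ × EuclideanSpace ℝ (Fin d) => w q.1 q.2))
    (hp_meas : Measurable (fun q : Θ × EuclideanSpace ℝ (Fin d) => p q.1 q.2))
    (hπ_meas : ∀ i j, Measurable (π' i j))
    (hp_nonneg : ∀ θ y, 0 ≤ p θ y)
    (hp_int : ∀ y, ∫ θ, p θ y ∂ϑ = 1)
    (hπ_nonneg : ∀ i j y, 0 ≤ π' i j y)
    (hπ_sum : ∀ i y, ∑ j, π' i j y = 1)
    -- the Markov kernel of the chain
    (κ : Kernel (EuclideanSpace ℝ (Fin d) × Fin N) (EuclideanSpace ℝ (Fin d) × Fin N))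
    [IsMarkovKernel κ]
    (hκ : ∀ x A, MeasurableSet A → κ x A = Ptrans ϑ Λ S w p π' x A)
    -- an invariant probability measure
    (μs : Measure (EuclideanSpace ℝ (Fin d) × Fin N)) [IsProbabilityMeasure μs]
    (hinv : μs.bind ⇑κ = μs)
    -- the small set hypothesis
    (U V : Set (EuclideanSpace ℝ (Fin d))) (hU : IsOpen U) (hV : IsOpen V)
    (i : Fin N) (n : ℕ) (hn : 1 ≤ n) (cbar : ℝ) (hcbar : 0 < cbar)
    (hsmall : ∀ y ∈ U, ∀ j : Fin N, ∀ B : Set (EuclideanSpace ℝ (Fin d)), MeasurableSet B →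
      ENNReal.ofReal cbar * volume (B ∩ V) ≤
        ((fun ν : Measure (EuclideanSpace ℝ (Fin d) × Fin N) => ν.bind ⇑κ)^[n]
          (Measure.dirac (y, i))) (B ×ˢ ({j} : Set (Fin N))))
    -- the accessibility hypothesis
    (Xtld : Set (EuclideanSpace ℝ (Fin d) × Fin N)) (hXtld_meas : MeasurableSet Xtld)
    (hXtld_pos : 0 < μs Xtld) (m : ℕ) (hm : 1 ≤ m) (δ : ℝ) (hδ : 0 < δ)
    (hacc : ∀ x ∈ Xtld,
      ENNReal.ofReal δ ≤
        ((fun ν : Measure (EuclideanSpace ℝ (Fin d) × Fin N) => ν.bind ⇑κ)^[m]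
          (Measure.dirac x)) (U ×ˢ ({i} : Set (Fin N)))) :
    (∀ B : Set (EuclideanSpace ℝ (Fin d)), MeasurableSet B → ∀ j : Fin N,
      ENNReal.ofReal cbar * ENNReal.ofReal δ * μs Xtld * volume (B ∩ V) ≤
        μs (B ×ˢ ({j} : Set (Fin N)))) ∧
    (V.Nonempty →
      μs.singularPart
        ((volume : Measure (EuclideanSpace ℝ (Fin d))).prod Measure.count) ≠ μs) :=
  prop_4_4_general κ μs hinv U V hU hV i n cbar hcbar hsmall Xtld hXtld_pos m δ hδ hacc
end
end

section
/- Lemma 4.7 (uniform accessibility from a set of positive measure, case of finitely many jump transformations). Assume Θ is a nonempty finite type with ϑ = Measure.count, and that the maps (θ,y) ↦ w θ y, (t,y) ↦ S i t y, p θ and π i j are continuous. Suppose Condition (A) holds at some (ŷ,i) ∈ X. Let μ be a nonzero finite Borel measure on X and let U ⊆ Y be an open set containing ŷ. Then there exist ε > 0, β > 0, m ≥ 1, a path ĵ : Fin (m+1) → I with ĵ m = i, times t̂ : Fin m → ℝ with t̂ k ≥ 0 for all k, parameters θ̂ : Fin m → Θ, and an open set X̃ ⊆ X with μ X̃ > 0,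 such that for every (y,j) ∈ X̃ and every t : Fin m → ℝ with 0 ≤ t k and |t k − t̂ k| < ε for all k, the trajectory from y with path Function.update ĵ 0 j, times t and parameters θ̂ has its endpoint in U and has weight strictly greater than β. -/
open MeasureTheory ENNReal ProbabilityTheory Filter

noncomputable section

/-- The deterministic trajectory of the post-jump locations: starting at `y`, with semiflow
indices `js`, flow durations `ts` and jump parameters `θs`. -/
def traj {Y I' Θ : Type*} (S : I' → ℝ → Y → Y) (w : Θ → Y → Y)
    (y : Y) {n : ℕ} (js : Fin (n+1) → I') (ts : Fin n → ℝ) (θs : Fin n → Θ) :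
    Fin (n+1) → Y :=
  fun k => Fin.induction (motive := fun _ => Y) y
    (fun m ym => w (θs m) (S (js m.castSucc) (ts m) ym)) k

/-- The weight (product of jump-density and switching-probability values) of a trajectory. -/
def trajWeight {Y I' Θ : Type*} (S : I' → ℝ → Y → Y) (w : Θ → Y → Y)
    (p : Θ → Y → ℝ) (π' : I' → I' → Y → ℝ)
    (y : Y) {n : ℕ} (js : Fin (n+1) → I') (ts : Fin n → ℝ) (θs : Fin n → Θ) : ℝ :=
  ∏ k : Fin n,
    (p (θs k) (S (js k.castSucc) (ts k) (traj S w y js ts θs k.castSucc)) *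
     π' (js k.castSucc) (js k.succ) (traj S w y js ts θs k.succ))

/-- Condition (A) at a point `xhat = (yhat, i)`. -/
def CondA {Y I' Θ : Type*} [TopologicalSpace Y] [Fintype I'] (S : I' → ℝ → Y → Y)
    (w : Θ → Y → Y) (p : Θ → Y → ℝ) (π' : I' → I' → Y → ℝ) (xhat : Y × I') : Prop :=
  ∀ V : Set Y, IsOpen V → xhat.1 ∈ V → ∀ (y : Y) (j : I'),
    ∃ n : ℕ, 1 ≤ n ∧ ∃ (js : Fin (n+1) → I') (ts : Fin n → ℝ) (θs : Fin n → Θ),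
      js 0 = j ∧ js (Fin.last n) = xhat.2 ∧ (∀ k, 0 ≤ ts k) ∧
      traj S w y js ts θs (Fin.last n) ∈ V ∧
      0 < trajWeight S w p π' y js ts θs

section auxLemmas

variable {Y I' Θ : Type*} [TopologicalSpace Y]

lemma traj_zero' (S : I' → ℝ → Y → Y) (w : Θ → Y → Y) (y : Y) {n : ℕ}
    (js : Fin (n+1) → I') (ts : Fin n → ℝ) (θs : Fin n → Θ) :
    traj S w y js ts θs 0 = y := rfl

lemma traj_succ' (S : I' → ℝ → Y → Y) (w : Θ → Y → Y) (y : Y) {n : ℕ}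
    (js : Fin (n+1) → I') (ts : Fin n → ℝ) (θs : Fin n → Θ) (k : Fin n) :
    traj S w y js ts θs k.succ
      = w (θs k) (S (js k.castSucc) (ts k) (traj S w y js ts θs k.castSucc)) := by
  simp [traj]

lemma continuous_traj' [TopologicalSpace Y] {n : ℕ}
    (S : I' → ℝ → Y → Y) (w : Θ → Y → Y)
    (hw : ∀ θ, Continuous (w θ)) (hS : ∀ i, Continuous fun q : ℝ × Y => S i q.1 q.2)
    (js : Fin (n+1) → I') (θs : Fin n → Θ) (k : Fin (n+1)) :
    Continuous (fun q : Y × (Fin n → ℝ) => traj S w q.1 js q.2 θs k) := by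
  induction k using Fin.induction with
  | zero => exact continuous_fst
  | succ k ih =>
      have h : (fun q : Y × (Fin n → ℝ) => traj S w q.1 js q.2 θs k.succ)
          = fun q : Y × (Fin n → ℝ) =>
              w (θs k) (S (js k.castSucc) (q.2 k) (traj S w q.1 js q.2 θs k.castSucc)) := by
        funext q; rw [traj_succ']
      rw [h]
      exact (hw _).comp ((hS _).comp (((continuous_apply k).comp continuous_snd).prodMk ih))

lemma continuous_trajWeight' [TopologicalSpace Y] {n : ℕ}
    (S : I' → ℝ → Y → Y) (w : Θ → Y → Y) (p : Θ → Y → ℝ) (π' : I' → I' → Y → ℝ)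
    (hw : ∀ θ, Continuous (w θ)) (hS : ∀ i, Continuous fun q : ℝ × Y => S i q.1 q.2)
    (hp : ∀ θ, Continuous (p θ)) (hπ : ∀ i j, Continuous (π' i j))
    (js : Fin (n+1) → I') (θs : Fin n → Θ) :
    Continuous (fun q : Y × (Fin n → ℝ) => trajWeight S w p π' q.1 js q.2 θs) := by
  unfold trajWeight
  apply continuous_finset_prod
  intro k _
  exact ((hp _).comp ((hS _).comp (((continuous_apply k).comp continuous_snd).prodMk
      (continuous_traj' S w hw hS js θs k.castSucc)))).mul
    ((hπ _ _).comp (continuous_traj' S w hw hS js θs k.succ))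

end auxLemmas

/-- **Lemma 4.7** (uniform accessibility, case of finitely many jump transformations). If
Condition (A) holds at `(yhat, i)`, then for any nonzero finite measure `μ` and any open
neighbourhood `U` of `yhat` there are an open set `X̃` of positive `μ`-measure and uniform
trajectory data steering every point of `X̃` into `U` with weight bounded below. -/
theorem lem_4_7
    {d N : ℕ} (hd : 0 < d) (hN : 0 < N)
    {Θ : Type*} [MeasurableSpace Θ] [Finite Θ] [Nonempty Θ]
    (ϑ : Measure Θ) (hϑ : ϑ = Measure.count)
    (S : Fin N → ℝ → EuclideanSpace ℝ (Fin d) → EuclideanSpace ℝ (Fin d))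
    (w : Θ → EuclideanSpace ℝ (Fin d) → EuclideanSpace ℝ (Fin d))
    (p : Θ → EuclideanSpace ℝ (Fin d) → ℝ)
    (π' : Fin N → Fin N → EuclideanSpace ℝ (Fin d) → ℝ)
    (hp_nonneg : ∀ θ y, 0 ≤ p θ y)
    (hπ_nonneg : ∀ i j y, 0 ≤ π' i j y)
    -- continuity assumptions
    (hw_cont : ∀ θ, Continuous (w θ))
    (hS_cont : ∀ i, Continuous (fun q : ℝ × EuclideanSpace ℝ (Fin d) => S i q.1 q.2))
    (hp_cont : ∀ θ, Continuous (p θ))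
    (hπ_cont : ∀ i j, Continuous (π' i j))
    -- Condition (A) at (yhat, i)
    (yhat : EuclideanSpace ℝ (Fin d)) (i : Fin N)
    (hA : CondA S w p π' (yhat, i))
    -- a nonzero finite measure and an open neighbourhood of yhat
    (μ : Measure (EuclideanSpace ℝ (Fin d) × Fin N)) [IsFiniteMeasure μ] (hμ : μ ≠ 0)
    (U : Set (EuclideanSpace ℝ (Fin d))) (hU : IsOpen U) (hyU : yhat ∈ U) :
    ∃ (ε β : ℝ), 0 < ε ∧ 0 < β ∧
      ∃ m : ℕ, 1 ≤ m ∧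
        ∃ (jhat : Fin (m+1) → Fin N) (that : Fin m → ℝ) (thhat : Fin m → Θ),
          jhat (Fin.last m) = i ∧ (∀ k, 0 ≤ that k) ∧
          ∃ Xtld : Set (EuclideanSpace ℝ (Fin d) × Fin N), IsOpen Xtld ∧ 0 < μ Xtld ∧
            ∀ (y : EuclideanSpace ℝ (Fin d)) (j : Fin N), (y, j) ∈ Xtld →
              ∀ t : Fin m → ℝ, (∀ k, 0 ≤ t k ∧ |t k - that k| < ε) →
                traj S w y (Function.update jhat 0 j) t thhat (Fin.last m) ∈ U ∧
                β < trajWeight S w p π' y (Function.update jhat 0 j) t thhat := by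
  -- find a point all of whose open neighbourhoods have positive measure
  have hx : ∃ x : EuclideanSpace ℝ (Fin d) × Fin N,
      ∀ V : Set (EuclideanSpace ℝ (Fin d) × Fin N), IsOpen V → x ∈ V → 0 < μ V := by
    by_contra h
    push_neg at h
    apply hμ
    rw [← Measure.measure_univ_eq_zero]
    apply measure_null_of_locally_null
    intro x _
    obtain ⟨V, hVo, hxV, hV0⟩ := h x
    refine ⟨V, mem_nhdsWithin_of_mem_nhds (hVo.mem_nhds hxV), ?_⟩
    simpa using hV0
  obtain ⟨x₀, hx₀⟩ := hx
  obtain ⟨n, hn, js, ts, θs, hjs0, hjslast, hts, hend, hwt⟩ := hA U hU hyU x₀.1 x₀.2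
  set β : ℝ := trajWeight S w p π' x₀.1 js ts θs / 2 with hβ
  have hβpos : 0 < β := by positivity
  -- the open set of good (y, t)
  set A : Set (EuclideanSpace ℝ (Fin d) × (Fin n → ℝ)) :=
    {q | traj S w q.1 js q.2 θs (Fin.last n) ∈ U ∧ β < trajWeight S w p π' q.1 js q.2 θs}
    with hA_def
  have hAopen : IsOpen A := by
    have h1 : IsOpen {q : EuclideanSpace ℝ (Fin d) × (Fin n → ℝ) |
        traj S w q.1 js q.2 θs (Fin.last n) ∈ U} :=
      hU.preimage (continuous_traj' S w hw_cont hS_cont js θs (Fin.last n))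
    have h2 : IsOpen {q : EuclideanSpace ℝ (Fin d) × (Fin n → ℝ) |
        β < trajWeight S w p π' q.1 js q.2 θs} :=
      isOpen_lt continuous_const
        (continuous_trajWeight' S w p π' hw_cont hS_cont hp_cont hπ_cont js θs)
    exact h1.inter h2
  have hmemA : (x₀.1, ts) ∈ A := ⟨hend, by rw [hβ]; linarith⟩
  obtain ⟨δ, hδpos, hδ⟩ := Metric.isOpen_iff.1 hAopen _ hmemA
  set ε : ℝ := δ / 2 with hε
  have hεpos : 0 < ε := by positivity
  refine ⟨ε, β, hεpos, hβpos, n, hn, js, ts, θs, hjslast, hts,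
    Metric.ball x₀.1 ε ×ˢ {x₀.2}, (Metric.isOpen_ball).prod (isOpen_discrete _), ?_, ?_⟩
  · exact hx₀ _ ((Metric.isOpen_ball).prod (isOpen_discrete _))
      ⟨Metric.mem_ball_self hεpos, rfl⟩
  · rintro y j ⟨hy, hj⟩ t ht
    have hj' : j = x₀.2 := hj
    have hupd : Function.update js 0 j = js := by
      rw [hj', ← hjs0]; exact Function.update_eq_self 0 js
    have hmem : (y, t) ∈ Metric.ball (x₀.1, ts) δ := by
      rw [Metric.mem_ball, Prod.dist_eq]
      refine max_lt (lt_of_lt_of_le hy (by linarith)) ?_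
      rw [dist_pi_lt_iff hδpos]
      intro k
      have := (ht k).2
      rw [Real.dist_eq]
      calc |t k - ts k| < ε := this
        _ < δ := by linarith
    have := hδ hmem
    rw [hupd]
    exact ⟨this.1, this.2⟩
end
end

section
/- Lemma 4.2 (first part, for the kernel G). Assume that for every i ∈ I and every t ≥ 0 the map S i t is measurable with Measure.map (S i t) volume ≪ volume. Then for every finite measure μ on X with μ ≪ ℓ̄, the measure Gμ is absolutely continuous with respect to ℓ̄; equivalently, for every measurable A ⊆ X with ℓ̄ A = 0 one has ∫⁻ x, G(x,A) ∂μ = 0. -/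
open MeasureTheory ENNReal ProbabilityTheory Filter

noncomputable section

/-! `G(·, A)` vanishes `ℓ̄`-a.e. when `ℓ̄ A = 0`: on each layer `Y × {i}` the slice `Aᵢ` is
Lebesgue-null, so for every `t > 0` the nonsingular map `S i t` sends almost no `y` into `Aᵢ`;
exchanging "for a.e. `t`" with "for a.e. `y`" shows that the time integral defining
`G((y, i), A)` vanishes for a.e. `y`. Absolute continuity `μ ≪ ℓ̄` then kills `∫ G(x, A) dμ`. -/

theorem MeasureTheory.Measure.ae_prod_count_iff {Y I : Type*} [MeasurableSpace Y]
    [MeasurableSpace I] [Countable I] [MeasurableSingletonClass I] {ν : Measure Y} [SFinite ν]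
    {p : Y × I → Prop} :
    (∀ᵐ x ∂ν.prod Measure.count, p x) ↔ ∀ i, ∀ᵐ y ∂ν, p (y, i) := by
  simp only [ae_iff]
  constructor
  · intro h i
    have hsub : {y | ¬p (y, i)} ×ˢ {i} ⊆ {x | ¬p x} := by
      rintro ⟨y, j⟩ ⟨hy, rfl⟩
      exact hy
    have h0 := measure_mono_null hsub h
    rwa [Measure.prod_prod, Measure.count_singleton, mul_one] at h0
  · intro h
    have hcover : {x : Y × I | ¬p x} ⊆ ⋃ i, {y | ¬p (y, i)} ×ˢ {i} := by
      rintro ⟨y, i⟩ hx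
      exact Set.mem_iUnion.2 ⟨i, hx, rfl⟩
    refine measure_mono_null hcover (measure_iUnion_null fun i => ?_)
    rw [Measure.prod_prod, h i, zero_mul]

theorem MeasureTheory.ae_lintegral_eq_zero_of_ae_ae {T Y : Type*} [MeasurableSpace T]
    [MeasurableSpace Y] {ρ : Measure T} {ν : Measure Y} [SFinite ρ] [SFinite ν] {g : T → Y → ℝ≥0∞}
    (hg : Measurable (Function.uncurry g)) (h : ∀ᵐ t ∂ρ, ∀ᵐ y ∂ν, g t y = 0) :
    ∀ᵐ y ∂ν, ∫⁻ t, g t y ∂ρ = 0 := by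
  have hzero : MeasurableSet {p : T × Y | g p.1 p.2 = 0} :=
    measurableSet_eq_fun hg measurable_const
  filter_upwards [(Measure.ae_ae_comm hzero).1 h] with y hy
  rw [lintegral_congr_ae hy, lintegral_zero]

theorem lem_4_2_G_general
    {d N : ℕ}
    (Λ : ℝ)
    (S : Fin N → ℝ → EuclideanSpace ℝ (Fin d) → EuclideanSpace ℝ (Fin d))
    (hS_meas : ∀ i, Measurable (fun q : ℝ × EuclideanSpace ℝ (Fin d) => S i q.1 q.2))
    (hS_ns : ∀ i, ∀ t : ℝ, 0 ≤ t → Measurable (S i t) ∧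
      (volume : Measure (EuclideanSpace ℝ (Fin d))).map (S i t) ≪ volume)
    (μ : Measure (EuclideanSpace ℝ (Fin d) × Fin N))
    (hμ : μ ≪ (volume : Measure (EuclideanSpace ℝ (Fin d))).prod Measure.count) :
    ∀ A : Set (EuclideanSpace ℝ (Fin d) × Fin N), MeasurableSet A →
      ((volume : Measure (EuclideanSpace ℝ (Fin d))).prod Measure.count) A = 0 →
      ∫⁻ x, Gtrans Λ S x A ∂μ = 0 := by
  intro A hA hA0
  have hslice := Measure.ae_prod_count_iff.1 (measure_eq_zero_iff_ae_notMem.1 hA0)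
  have hweight : Measurable fun t : ℝ => ENNReal.ofReal (Λ * Real.exp (-(Λ * t))) := by
    fun_prop
  have hG : ∀ᵐ x ∂(volume : Measure (EuclideanSpace ℝ (Fin d))).prod Measure.count,
      Gtrans Λ S x A = 0 := by
    refine Measure.ae_prod_count_iff.2 fun i => ae_lintegral_eq_zero_of_ae_ae ?_ ?_
    · exact (hweight.comp measurable_fst).mul
        (measurable_const.indicator hA |>.comp ((hS_meas i).prodMk measurable_const))
    · refine ae_restrict_of_forall_mem measurableSet_Ioi fun t ht => ?_
      have hqmp : Measure.QuasiMeasurePreserving (S i t) volume volume :=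
        ⟨(hS_ns i t (le_of_lt ht)).1, (hS_ns i t (le_of_lt ht)).2⟩
      filter_upwards [hqmp.ae (hslice i)] with y hy
      rw [Set.indicator_of_notMem hy, mul_zero]
  rw [lintegral_congr_ae (hμ.ae_le hG), lintegral_zero]

/-- **Lemma 4.2** (first part, for the kernel `G`). If every map `S i t`, `t ≥ 0`, is
measurable and nonsingular w.r.t. Lebesgue measure, then `G` preserves absolute continuity
with respect to `ℓ̄ = volume ⊗ count`. -/
theorem lem_4_2_G
    {d N : ℕ} (hd : 0 < d) (hN : 0 < N)
    (Λ : ℝ) (hΛ : 0 < Λ)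
    (S : Fin N → ℝ → EuclideanSpace ℝ (Fin d) → EuclideanSpace ℝ (Fin d))
    (hS_meas : ∀ i, Measurable (fun q : ℝ × EuclideanSpace ℝ (Fin d) => S i q.1 q.2))
    (hS_ns : ∀ i, ∀ t : ℝ, 0 ≤ t → Measurable (S i t) ∧
      (volume : Measure (EuclideanSpace ℝ (Fin d))).map (S i t) ≪ volume)
    (μ : Measure (EuclideanSpace ℝ (Fin d) × Fin N)) [IsFiniteMeasure μ]
    (hμ : μ ≪ (volume : Measure (EuclideanSpace ℝ (Fin d))).prod Measure.count) :
    ∀ A : Set (EuclideanSpace ℝ (Fin d) × Fin N), MeasurableSet A →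
      ((volume : Measure (EuclideanSpace ℝ (Fin d))).prod Measure.count) A = 0 →
      ∫⁻ x, Gtrans Λ S x A ∂μ = 0 :=
  lem_4_2_G_general Λ S hS_meas hS_ns μ hμ
end
end

section
/- Lemma 4.2 (second part, for the kernel W). Assume that for every θ ∈ Θ the map w θ is measurable with Measure.map (w θ) volume ≪ volume. Then for every finite measure μ on X with μ ≪ ℓ̄, the measure Wμ is absolutely continuous with respect to ℓ̄; equivalently, for every measurable A ⊆ X with ℓ̄ A = 0 one has ∫⁻ x, W(x,A) ∂μ = 0. -/
open MeasureTheory ENNReal ProbabilityTheory Filter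

noncomputable section

/-- **Lemma 4.2** (second part, for the kernel `W`). If every map `w θ` is measurable and
nonsingular w.r.t. Lebesgue measure, then `W` preserves absolute continuity with respect to
`ℓ̄ = volume ⊗ count`. -/
theorem lem_4_2_W
    {d N : ℕ} (hd : 0 < d) (hN : 0 < N)
    {Θ : Type*} [MeasurableSpace Θ] (ϑ : Measure Θ) [IsFiniteMeasure ϑ]
    (w : Θ → EuclideanSpace ℝ (Fin d) → EuclideanSpace ℝ (Fin d))
    (p : Θ → EuclideanSpace ℝ (Fin d) → ℝ)
    (π' : Fin N → Fin N → EuclideanSpace ℝ (Fin d) → ℝ)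
    (hw_meas : Measurable (fun q : Θ × EuclideanSpace ℝ (Fin d) => w q.1 q.2))
    (hp_meas : Measurable (fun q : Θ × EuclideanSpace ℝ (Fin d) => p q.1 q.2))
    (hπ_meas : ∀ i j, Measurable (π' i j))
    (hp_nonneg : ∀ θ y, 0 ≤ p θ y)
    (hp_int : ∀ y, ∫ θ, p θ y ∂ϑ = 1)
    (hπ_nonneg : ∀ i j y, 0 ≤ π' i j y)
    (hπ_sum : ∀ i y, ∑ j, π' i j y = 1)
    (hw_ns : ∀ θ : Θ, Measurable (w θ) ∧
      (volume : Measure (EuclideanSpace ℝ (Fin d))).map (w θ) ≪ volume)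
    (μ : Measure (EuclideanSpace ℝ (Fin d) × Fin N)) [IsFiniteMeasure μ]
    (hμ : μ ≪ (volume : Measure (EuclideanSpace ℝ (Fin d))).prod Measure.count) :
    ∀ A : Set (EuclideanSpace ℝ (Fin d) × Fin N), MeasurableSet A →
      ((volume : Measure (EuclideanSpace ℝ (Fin d))).prod Measure.count) A = 0 →
      ∫⁻ x, Wtrans ϑ w p π' x A ∂μ = 0 := by
  intro A hA hA0
  have hAj_meas : ∀ j : Fin N, MeasurableSet {y : EuclideanSpace ℝ (Fin d) | (y, j) ∈ A} :=
    fun j => hA.preimage measurable_prodMk_right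
  have hsec : ∀ j : Fin N, volume {y : EuclideanSpace ℝ (Fin d) | (y, j) ∈ A} = 0 := by
    intro j
    have h := (Measure.measure_prod_null
      (μ := (volume : Measure (EuclideanSpace ℝ (Fin d)))) (ν := Measure.count) hA).mp hA0
    have h2 : ∀ᵐ y ∂(volume : Measure (EuclideanSpace ℝ (Fin d))),
        Measure.count (Prod.mk y ⁻¹' A) = 0 := h
    refine measure_mono_null ?_ (ae_iff.mp h2)
    intro y hy
    exact Measure.count_ne_zero ⟨j, hy⟩
  set g : Fin N → EuclideanSpace ℝ (Fin d) → ℝ≥0∞ := fun j y =>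
    ∫⁻ θ, Set.indicator {y' | (y', j) ∈ A} (fun _ => (1:ℝ≥0∞)) (w θ y) ∂ϑ with hg
  have hF_meas : ∀ j : Fin N,
      Measurable (fun q : Θ × EuclideanSpace ℝ (Fin d) =>
        Set.indicator {y' | (y', j) ∈ A} (fun _ => (1:ℝ≥0∞)) (w q.1 q.2)) := fun j =>
    (measurable_one.indicator (hAj_meas j)).comp hw_meas
  have hg_meas : ∀ j : Fin N, Measurable (g j) := fun j =>
    Measurable.lintegral_prod_left (hF_meas j)
  have hg_zero : ∀ j : Fin N, ∀ᵐ y ∂(volume : Measure (EuclideanSpace ℝ (Fin d))),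
      g j y = 0 := by
    intro j
    refine (lintegral_eq_zero_iff (hg_meas j)).mp ?_
    have hswap := lintegral_lintegral_swap
      (μ := (volume : Measure (EuclideanSpace ℝ (Fin d)))) (ν := ϑ)
      (f := fun y θ => Set.indicator {y' | (y', j) ∈ A} (fun _ => (1:ℝ≥0∞)) (w θ y))
      (((hF_meas j).comp measurable_swap).aemeasurable)
    have hinner : ∀ θ : Θ, (∫⁻ y, Set.indicator {y' | (y', j) ∈ A}
        (fun _ => (1:ℝ≥0∞)) (w θ y) ∂(volume : Measure (EuclideanSpace ℝ (Fin d)))) = 0 := by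
      intro θ
      rw [lintegral_indicator_const_comp (hw_ns θ).1 (hAj_meas j), one_mul,
        ← Measure.map_apply (hw_ns θ).1 (hAj_meas j)]
      exact (hw_ns θ).2 (hsec j)
    show (∫⁻ y, ∫⁻ θ, Set.indicator {y' | (y', j) ∈ A} (fun _ => (1:ℝ≥0∞)) (w θ y) ∂ϑ
        ∂(volume : Measure (EuclideanSpace ℝ (Fin d)))) = 0
    rw [hswap]
    simp [hinner]
  have hae_prod : ∀ᵐ x ∂((volume : Measure (EuclideanSpace ℝ (Fin d))).prod (Measure.count : Measure (Fin N))),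
      ∀ j : Fin N, g j x.1 = 0 := by
    have hY : volume {y : EuclideanSpace ℝ (Fin d) | ¬ ∀ j : Fin N, g j y = 0} = 0 :=
      ae_iff.mp (ae_all_iff.mpr hg_zero)
    rw [ae_iff]
    refine measure_mono_null (fun x hx => ?_)
      (by rw [Measure.prod_prod, hY, zero_mul] :
        ((volume : Measure (EuclideanSpace ℝ (Fin d))).prod (Measure.count : Measure (Fin N)))
          ({y | ¬ ∀ j : Fin N, g j y = 0} ×ˢ Set.univ) = 0)
    exact ⟨hx, Set.mem_univ _⟩
  have haeμ : ∀ᵐ x ∂μ, ∀ j : Fin N, g j x.1 = 0 := hμ.ae_le hae_prod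
  have hW0 : ∀ᵐ x ∂μ, Wtrans ϑ w p π' x A = 0 := by
    filter_upwards [haeμ] with x hx
    unfold Wtrans
    refine Finset.sum_eq_zero fun j _ => ?_
    have hmeasθ : Measurable (fun θ =>
        Set.indicator {y' | (y', j) ∈ A} (fun _ => (1:ℝ≥0∞)) (w θ x.1)) :=
      (hF_meas j).comp (measurable_id.prodMk measurable_const)
    have h0 : ∀ᵐ θ ∂ϑ,
        Set.indicator {y' | (y', j) ∈ A} (fun _ => (1:ℝ≥0∞)) (w θ x.1) = 0 :=
      (lintegral_eq_zero_iff hmeasθ).mp (hx j)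
    have h1 : ∀ᵐ θ ∂ϑ,
        Set.indicator A (fun _ => (1:ℝ≥0∞)) (w θ x.1, j) *
        ENNReal.ofReal (π' x.2 j (w θ x.1)) * ENNReal.ofReal (p θ x.1) = 0 := by
      filter_upwards [h0] with θ hθ
      have hθ' : Set.indicator A (fun _ => (1:ℝ≥0∞)) (w θ x.1, j) = 0 := by
        simpa [Set.indicator_apply] using hθ
      simp [hθ']
    simpa using lintegral_congr_ae h1
  simpa using lintegral_congr_ae hW0
end
end

section
/- Lemma 1.3 (absolute continuity/singularity dichotomy). Let E be a measurable space, m a σ-finite measure on E, and κ : Kernel E E a Markov kernel such that for every finite measure μ on E with μ ≪ m one has μ.bind κ ≪ m. Then every probability measure μ* on E with μ*.bind κ = μ* that is an extreme point of the convex set of probability measures ν with ν.bind κ = ν satisfies either μ* ≪ m or μ* ⟂ m. -/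
open MeasureTheory ENNReal ProbabilityTheory

/-!
Let `μ* = σ + α` be the Lebesgue decomposition with respect to `m`. Since `κ` maps `α` to a
measure `≪ m`, the singular part of `μ* = κσ + κα` is at most `κσ`; as `κ` preserves total
mass this forces `κσ = σ`, and then `κα = α`. If both parts are nonzero, their normalisations
are invariant probability measures of which `μ*` is a proper convex combination, so by
extremality they coincide, which is impossible for a nonzero measure both `≪ m` and `⟂ m`.
-/

namespace ProbabilityTheory.Kernel

variable {E : Type*} [MeasurableSpace E] {κ : Kernel E E} {μ : Measure E}

lemma Invariant.smul (hμ : κ.Invariant μ) (c : ℝ≥0∞) : κ.Invariant (c • μ) := by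
  rw [Invariant, Measure.comp_smul, hμ.def]

section LebesgueDecomposition

variable {m : Measure E} [IsMarkovKernel κ] [IsFiniteMeasure μ] [SigmaFinite m]

lemma Invariant.singularPart (hμ : κ.Invariant μ)
    (hpres : ∀ ν : Measure E, IsFiniteMeasure ν → ν ≪ m → ν.bind κ ≪ m) :
    κ.Invariant (μ.singularPart m) := by
  set s := μ.singularPart m
  set a := m.withDensity (μ.rnDeriv m)
  have ha : IsFiniteMeasure a := isFiniteMeasure_of_le μ (Measure.withDensity_rnDeriv_le μ m)
  have hdec : μ = s + a := μ.haveLebesgueDecomposition_add m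
  have hle : s ≤ s.bind κ :=
    calc s = (s.bind κ + a.bind κ).singularPart m := by
          rw [← Measure.comp_add, ← hdec]; exact congrArg (·.singularPart m) hμ.symm
      _ = (s.bind κ).singularPart m := by
          rw [Measure.singularPart_add, (Measure.singularPart_eq_zero _ _).2
            (hpres a ha (MeasureTheory.withDensity_absolutelyContinuous _ _)), add_zero]
      _ ≤ s.bind κ := Measure.singularPart_le _ _
  exact (Measure.eq_of_le_of_measure_univ_eq hle Measure.comp_apply_univ.symm).symm

lemma Invariant.withDensity_rnDeriv (hμ : κ.Invariant μ)
    (hpres : ∀ ν : Measure E, IsFiniteMeasure ν → ν ≪ m → ν.bind κ ≪ m) :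
    κ.Invariant (m.withDensity (μ.rnDeriv m)) := by
  have hdec : μ = μ.singularPart m + m.withDensity (μ.rnDeriv m) :=
    μ.haveLebesgueDecomposition_add m
  refine (Measure.add_right_inj (μ.singularPart m) _ _).1 ?_
  calc μ.singularPart m + (m.withDensity (μ.rnDeriv m)).bind κ
      = (μ.singularPart m + m.withDensity (μ.rnDeriv m)).bind κ := by
        rw [Measure.comp_add, (hμ.singularPart hpres).def]
    _ = μ.singularPart m + m.withDensity (μ.rnDeriv m) := by rw [← hdec, hμ.def]

end LebesgueDecomposition

def IsExtremeInvariant (κ : Kernel E E) (μ : Measure E) : Prop :=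
  ∀ (ν₁ ν₂ : Measure E) (a : ℝ≥0∞), IsProbabilityMeasure ν₁ → IsProbabilityMeasure ν₂ →
    κ.Invariant ν₁ → κ.Invariant ν₂ → 0 < a → a < 1 → μ = a • ν₁ + (1 - a) • ν₂ → ν₁ = ν₂

lemma IsExtremeInvariant.smul_eq_smul_of_eq_add [IsProbabilityMeasure μ]
    (hμ : κ.IsExtremeInvariant μ) {ν₁ ν₂ : Measure E} (h₁ : κ.Invariant ν₁) (h₂ : κ.Invariant ν₂)
    (hν₁ : ν₁ ≠ 0) (hν₂ : ν₂ ≠ 0) (hsum : μ = ν₁ + ν₂) :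
    (ν₁ Set.univ)⁻¹ • ν₁ = (ν₂ Set.univ)⁻¹ • ν₂ := by
  have hmass : ν₁ Set.univ + ν₂ Set.univ = 1 := by
    rw [← Measure.add_apply, ← hsum, measure_univ]
  have : IsFiniteMeasure ν₁ := isFiniteMeasure_of_le μ (hsum ▸ Measure.le_add_right le_rfl)
  have : IsFiniteMeasure ν₂ := isFiniteMeasure_of_le μ (hsum ▸ Measure.le_add_left le_rfl)
  have : NeZero ν₁ := ⟨hν₁⟩
  have : NeZero ν₂ := ⟨hν₂⟩
  have ha : ν₁ Set.univ ≠ ∞ := measure_ne_top _ _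
  have hb : ν₂ Set.univ ≠ ∞ := measure_ne_top _ _
  refine hμ _ _ (ν₁ Set.univ) inferInstance inferInstance (h₁.smul _) (h₂.smul _)
    (pos_iff_ne_zero.2 (NeZero.ne _)) (hmass ▸ ENNReal.lt_add_right ha (NeZero.ne _)) ?_
  rw [ENNReal.sub_eq_of_eq_add_rev ha hmass.symm, smul_smul, smul_smul,
    ENNReal.mul_inv_cancel (NeZero.ne _) ha, ENNReal.mul_inv_cancel (NeZero.ne _) hb,
    one_smul, one_smul, hsum]

end ProbabilityTheory.Kernel

/-- **Lemma 1.3** (absolute continuity/singularity dichotomy). If a Markov kernel preserves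
absolute continuity with respect to a σ-finite measure `m`, then every ergodic (extreme)
invariant probability measure is either absolutely continuous or singular w.r.t. `m`. -/
theorem lem_1_3_dichotomy
    {E : Type*} [MeasurableSpace E] (m : Measure E) [SigmaFinite m]
    (κ : Kernel E E) [IsMarkovKernel κ]
    (hpres : ∀ μ : Measure E, IsFiniteMeasure μ → μ ≪ m → μ.bind ⇑κ ≪ m)
    (μs : Measure E) [IsProbabilityMeasure μs]
    (hinv : μs.bind ⇑κ = μs)
    (hext : ∀ (ν₁ ν₂ : Measure E) (a : ℝ≥0∞),
      IsProbabilityMeasure ν₁ → IsProbabilityMeasure ν₂ →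
      ν₁.bind ⇑κ = ν₁ → ν₂.bind ⇑κ = ν₂ → 0 < a → a < 1 →
      μs = a • ν₁ + (1 - a) • ν₂ → ν₁ = ν₂) :
    μs ≪ m ∨ μs.MutuallySingular m := by
  rcases eq_or_ne (μs.singularPart m) 0 with hs | hs
  · exact Or.inl ((Measure.singularPart_eq_zero _ _).1 hs)
  rcases eq_or_ne (m.withDensity (μs.rnDeriv m)) 0 with ha | ha
  · exact Or.inr ((Measure.withDensity_rnDeriv_eq_zero _ _).1 ha)
  have heq := Kernel.IsExtremeInvariant.smul_eq_smul_of_eq_add hext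
    (Kernel.Invariant.singularPart hinv hpres) (Kernel.Invariant.withDensity_rnDeriv hinv hpres)
    hs ha (μs.haveLebesgueDecomposition_add m)
  have hsing : ((μs.singularPart m Set.univ)⁻¹ • μs.singularPart m) ⟂ₘ m :=
    (μs.mutuallySingular_singularPart m).smul _
  have hac : ((μs.singularPart m Set.univ)⁻¹ • μs.singularPart m) ≪ m :=
    heq ▸ (MeasureTheory.withDensity_absolutelyContinuous _ _).smul_left _
  have : NeZero (μs.singularPart m) := ⟨hs⟩
  exact absurd (Measure.eq_zero_of_absolutelyContinuous_of_mutuallySingular hac hsing)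
    (IsProbabilityMeasure.ne_zero _)
end

section
/- Remark 5.3(ii). Assume Θ is a compact topological space (with its Borel σ-algebra) carrying a finite measure ϑ, that (θ,y) ↦ w θ y is continuous, and that Λ > 0. Suppose there exist y* ∈ Y, a measurable ψ : ℝ → ℝ with 0 ≤ ψ and ∫ t in Set.Ioi (0:ℝ), ψ t * Real.exp (-(Λ*t)) dt < ∞ such that ‖S j t y* − y*‖ ≤ ψ t for every t ≥ 0 and every j ∈ I, and suppose there exists L_w > 0 such that for every θ ∈ Θ the map w θ is Lipschitz with constant L_w. Then for every i ∈ I there exists M < ∞ such that for every y ∈ Y, ∫ θ ∂ϑ, ∫ t in Set.Ioi (0:ℝ), Real.exp (-(Λ*t)) * ‖w θ (S i t y*) − y*‖ * p θ (S i t y) dt ≤ M. -/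
open MeasureTheory ENNReal Filter
open scoped NNReal

/-!
By compactness of `Θ` and the common Lipschitz constant, `‖w θ (S i t y*) - y*‖ ≤ L_w ψ t + C`
uniformly in `θ`. Exchanging the `θ`- and `t`-integrals (Tonelli), the `θ`-integral of the density
`p θ (S i t y)` is `1` for every `t`, so the double integral is at most
`∫ (L_w ψ t + C) e^{-Λt} dt`, which is finite and does not depend on `y`.
-/

section

variable {α β : Type*} [MeasurableSpace α] [MeasurableSpace β] {μ : Measure α} {ν : Measure β}

theorem norm_integral_integral_le_toReal_lintegral {E : Type*} [NormedAddCommGroup E]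
    [NormedSpace ℝ E] [SFinite μ] [SFinite ν] {f : α → β → E}
    (hf : AEMeasurable (Function.uncurry fun a b => ‖f a b‖ₑ) (μ.prod ν))
    {g : β → ℝ≥0∞} (hg : ∀ᵐ b ∂ν, ∫⁻ a, ‖f a b‖ₑ ∂μ ≤ g b) (hg_fin : ∫⁻ b, g b ∂ν ≠ ∞) :
    ‖∫ a, ∫ b, f a b ∂ν ∂μ‖ ≤ (∫⁻ b, g b ∂ν).toReal := by
  have henorm : ‖∫ a, ∫ b, f a b ∂ν ∂μ‖ₑ ≤ ∫⁻ b, g b ∂ν :=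
    calc ‖∫ a, ∫ b, f a b ∂ν ∂μ‖ₑ
        ≤ ∫⁻ a, ‖∫ b, f a b ∂ν‖ₑ ∂μ := enorm_integral_le_lintegral_enorm _
      _ ≤ ∫⁻ a, ∫⁻ b, ‖f a b‖ₑ ∂ν ∂μ :=
          lintegral_mono fun a => enorm_integral_le_lintegral_enorm _
      _ = ∫⁻ b, ∫⁻ a, ‖f a b‖ₑ ∂μ ∂ν := lintegral_lintegral_swap hf
      _ ≤ ∫⁻ b, g b ∂ν := lintegral_mono_ae hg
  simpa using toReal_mono hg_fin henorm

theorem lintegral_enorm_mul_le_of_integral_eq_one {h p : α → ℝ} {c : ℝ}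
    (hh : ∀ a, ‖h a‖ ≤ c) (hp_nonneg : ∀ a, 0 ≤ p a) (hp : ∫ a, p a ∂μ = 1) :
    ∫⁻ a, ‖h a * p a‖ₑ ∂μ ≤ ENNReal.ofReal c := by
  have hp_lint : ∫⁻ a, ‖p a‖ₑ ∂μ = 1 := by
    rw [← ofReal_integral_norm_eq_lintegral_enorm (Integrable.of_integral_ne_zero (by simp [hp]))]
    simp [Real.norm_of_nonneg (hp_nonneg _), hp]
  calc ∫⁻ a, ‖h a * p a‖ₑ ∂μ
      ≤ ∫⁻ a, ENNReal.ofReal c * ‖p a‖ₑ ∂μ := by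
        refine lintegral_mono fun a => ?_
        rw [enorm_mul, ← ofReal_norm (h a)]
        gcongr
        exact hh a
    _ = ENNReal.ofReal c := by rw [lintegral_const_mul' _ _ ofReal_ne_top, hp_lint, mul_one]

theorem lintegral_ofReal_add_mul_lt_top {ψ e : α → ℝ} (K : ℝ≥0) (C : ℝ) (he_meas : Measurable e)
    (he : ∀ a, 0 ≤ e a) (hψe : ∫⁻ a, ENNReal.ofReal (ψ a * e a) ∂μ < ∞)
    (he_fin : ∫⁻ a, ENNReal.ofReal (e a) ∂μ < ∞) :
    ∫⁻ a, ENNReal.ofReal ((K * ψ a + C) * e a) ∂μ < ∞ :=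
  calc ∫⁻ a, ENNReal.ofReal ((K * ψ a + C) * e a) ∂μ
      ≤ ∫⁻ a, ENNReal.ofReal K * ENNReal.ofReal (ψ a * e a)
          + ENNReal.ofReal C * ENNReal.ofReal (e a) ∂μ := by
        refine lintegral_mono fun a => ?_
        rw [← ENNReal.ofReal_mul K.coe_nonneg, ← ENNReal.ofReal_mul' (he a), add_mul, mul_assoc]
        exact ENNReal.ofReal_add_le
    _ = ENNReal.ofReal K * ∫⁻ a, ENNReal.ofReal (ψ a * e a) ∂μ
          + ENNReal.ofReal C * ∫⁻ a, ENNReal.ofReal (e a) ∂μ := by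
        rw [lintegral_add_right _ (he_meas.ennreal_ofReal.const_mul _),
          lintegral_const_mul' _ _ ofReal_ne_top, lintegral_const_mul' _ _ ofReal_ne_top]
    _ < ∞ := by finiteness

end

theorem LipschitzWith.norm_sub_le_mul_norm_sub_add {X Y : Type*} [SeminormedAddCommGroup X]
    [SeminormedAddCommGroup Y] {K : ℝ≥0} {f : X → Y} (hf : LipschitzWith K f) (x y : X) (z : Y) :
    ‖f x - z‖ ≤ K * ‖x - y‖ + ‖f y - z‖ := by
  simpa only [dist_eq_norm] using
    (dist_triangle _ (f y) _).trans (add_le_add_left (hf.dist_le_mul x y) _)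

theorem rem_5_3_ii_general
    {d N : ℕ}
    {Θ : Type*} [TopologicalSpace Θ] [CompactSpace Θ] [MeasurableSpace Θ] [BorelSpace Θ]
    (ϑ : Measure Θ) [IsFiniteMeasure ϑ]
    (Λ : ℝ) (hΛ : 0 < Λ)
    (S : Fin N → ℝ → EuclideanSpace ℝ (Fin d) → EuclideanSpace ℝ (Fin d))
    (hS_meas : ∀ i, Measurable (fun q : ℝ × EuclideanSpace ℝ (Fin d) => S i q.1 q.2))
    (w : Θ → EuclideanSpace ℝ (Fin d) → EuclideanSpace ℝ (Fin d))
    (hw_cont : Continuous (fun q : Θ × EuclideanSpace ℝ (Fin d) => w q.1 q.2))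
    (p : Θ → EuclideanSpace ℝ (Fin d) → ℝ)
    (hp_meas : Measurable (fun q : Θ × EuclideanSpace ℝ (Fin d) => p q.1 q.2))
    (hp_nonneg : ∀ θ y, 0 ≤ p θ y)
    (hp_int : ∀ y, ∫ θ, p θ y ∂ϑ = 1)
    (ystar : EuclideanSpace ℝ (Fin d))
    (ψ : ℝ → ℝ)
    (hψ_int : (∫⁻ t in Set.Ioi (0:ℝ), ENNReal.ofReal (ψ t * Real.exp (-(Λ*t)))) < ⊤)
    (hψ_bound : ∀ (t : ℝ), 0 ≤ t → ∀ j : Fin N, ‖S j t ystar - ystar‖ ≤ ψ t)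
    (Lw : ℝ)
    (hw_lip : ∀ θ : Θ, ∀ u v : EuclideanSpace ℝ (Fin d), ‖w θ u - w θ v‖ ≤ Lw * ‖u - v‖) :
    ∀ i : Fin N, ∃ M : ℝ, ∀ y : EuclideanSpace ℝ (Fin d),
      (∫ θ, (∫ t in Set.Ioi (0:ℝ),
        Real.exp (-(Λ*t)) * ‖w θ (S i t ystar) - ystar‖ * p θ (S i t y)) ∂ϑ) ≤ M := by
  intro i
  obtain ⟨C, hC⟩ : ∃ C, ∀ θ, ‖w θ ystar - ystar‖ ≤ C := by
    obtain ⟨C, hC⟩ := isCompact_univ.exists_bound_of_continuousOn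
      ((hw_cont.comp (continuous_id.prodMk continuous_const)).sub continuous_const).norm.continuousOn
    exact ⟨C, fun θ => by simpa using hC θ trivial⟩
  have hw : ∀ θ, LipschitzWith Lw.toNNReal (w θ) := fun θ =>
    LipschitzWith.of_dist_le' fun u v => by simpa only [dist_eq_norm] using hw_lip θ u v
  have hS : ∀ z, Measurable fun q : Θ × ℝ => (q.1, S i q.2 z) := fun z =>
    measurable_fst.prodMk ((hS_meas i).comp (measurable_snd.prodMk measurable_const))
  refine ⟨(∫⁻ t in Set.Ioi 0,
    ENNReal.ofReal ((Lw.toNNReal * ψ t + C) * Real.exp (-(Λ * t)))).toReal, fun y => ?_⟩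
  refine (Real.le_norm_self _).trans (norm_integral_integral_le_toReal_lintegral ?_ ?_ ?_)
  · have hexp : Measurable fun q : Θ × ℝ => Real.exp (-(Λ * q.2)) := by fun_prop
    exact ((hexp.mul ((hw_cont.measurable.comp (hS ystar)).sub_const ystar).norm).mul
      (hp_meas.comp (hS y))).enorm.aemeasurable
  · filter_upwards [ae_restrict_mem measurableSet_Ioi] with t ht
    refine lintegral_enorm_mul_le_of_integral_eq_one (fun θ => ?_) (fun θ => hp_nonneg θ _)
      (hp_int _)
    have hdisp : ‖w θ (S i t ystar) - ystar‖ ≤ Lw.toNNReal * ψ t + C :=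
      ((hw θ).norm_sub_le_mul_norm_sub_add _ ystar ystar).trans <| by
        gcongr
        exacts [hψ_bound t ht.le i, hC θ]
    rw [Real.norm_of_nonneg (by positivity), mul_comm]
    exact mul_le_mul_of_nonneg_right hdisp (Real.exp_pos _).le
  · refine (lintegral_ofReal_add_mul_lt_top _ _ (by fun_prop) (fun t => (Real.exp_pos _).le)
      hψ_int ?_).ne
    simpa using (exp_neg_integrableOn_Ioi 0 hΛ).lintegral_lt_top

/-- **Remark 5.3(ii).** If `Θ` is compact, the semiflows do not move `y*` faster than an
integrable bound `ψ`, and all the maps `w θ` are Lipschitz with one common constant, then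
condition (3) of Theorem 5.1 holds: the relevant double integrals are bounded uniformly
in `y`. -/
theorem rem_5_3_ii
    {d N : ℕ} (hd : 0 < d) (hN : 0 < N)
    {Θ : Type*} [TopologicalSpace Θ] [CompactSpace Θ] [MeasurableSpace Θ] [BorelSpace Θ]
    (ϑ : Measure Θ) [IsFiniteMeasure ϑ]
    (Λ : ℝ) (hΛ : 0 < Λ)
    (S : Fin N → ℝ → EuclideanSpace ℝ (Fin d) → EuclideanSpace ℝ (Fin d))
    (hS_meas : ∀ i, Measurable (fun q : ℝ × EuclideanSpace ℝ (Fin d) => S i q.1 q.2))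
    (w : Θ → EuclideanSpace ℝ (Fin d) → EuclideanSpace ℝ (Fin d))
    (hw_cont : Continuous (fun q : Θ × EuclideanSpace ℝ (Fin d) => w q.1 q.2))
    (p : Θ → EuclideanSpace ℝ (Fin d) → ℝ)
    (hp_meas : Measurable (fun q : Θ × EuclideanSpace ℝ (Fin d) => p q.1 q.2))
    (hp_nonneg : ∀ θ y, 0 ≤ p θ y)
    (hp_int : ∀ y, ∫ θ, p θ y ∂ϑ = 1)
    (ystar : EuclideanSpace ℝ (Fin d))
    (ψ : ℝ → ℝ) (hψ_meas : Measurable ψ) (hψ_nonneg : ∀ t, 0 ≤ ψ t)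
    (hψ_int : (∫⁻ t in Set.Ioi (0:ℝ), ENNReal.ofReal (ψ t * Real.exp (-(Λ*t)))) < ⊤)
    (hψ_bound : ∀ (t : ℝ), 0 ≤ t → ∀ j : Fin N, ‖S j t ystar - ystar‖ ≤ ψ t)
    (Lw : ℝ) (hLw : 0 < Lw)
    (hw_lip : ∀ θ : Θ, ∀ u v : EuclideanSpace ℝ (Fin d), ‖w θ u - w θ v‖ ≤ Lw * ‖u - v‖) :
    ∀ i : Fin N, ∃ M : ℝ, ∀ y : EuclideanSpace ℝ (Fin d),
      (∫ θ, (∫ t in Set.Ioi (0:ℝ),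
        Real.exp (-(Λ*t)) * ‖w θ (S i t ystar) - ystar‖ * p θ (S i t y)) ∂ϑ) ≤ M :=
  rem_5_3_ii_general ϑ Λ hΛ S hS_meas w hw_cont p hp_meas hp_nonneg hp_int ystar ψ hψ_int hψ_bound
    Lw hw_lip
end

section
/- Remark 6.1 (Condition (A) from a contractive jump map). Assume S i 0 y = y for every i ∈ I and y ∈ Y, and that (θ,y) ↦ w θ y is continuous. Suppose there exist θ̄ ∈ Θ, z ∈ Y, i ∈ I and K ∈ [0,1) such that: (i) ‖w θ̄ u − w θ̄ v‖ ≤ K * ‖u − v‖ for all u, v ∈ Y and w θ̄ z = z; (ii) p θ̄ y > 0 for every y ∈ Y; (iii) for every n ≥ 1 there exist indices j₁, …, jₙ ∈ I with jₙ = i such that for every j₀ ∈ I and every y in the range of w θ̄ one has π j₀ j₁ y > 0 and π j_{k−1} j_k y > 0 for all 2 ≤ k ≤ n. Then Condition (A) holds at (z, i). -/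
open MeasureTheory ENNReal ProbabilityTheory Filter

noncomputable section

/-- **Remark 6.1** (Condition (A) from a contractive jump map). If some `w θ̄` is a contraction
with fixed point `z`, `p θ̄` is everywhere positive, and suitable switching probabilities are
positive along paths of every length ending at `i`, then Condition (A) holds at `(z, i)`. -/
theorem rem_6_1
    {d N : ℕ} (hd : 0 < d) (hN : 0 < N)
    {Θ : Type*} [TopologicalSpace Θ] [MeasurableSpace Θ]
    (ϑ : Measure Θ) [IsFiniteMeasure ϑ]
    (S : Fin N → ℝ → EuclideanSpace ℝ (Fin d) → EuclideanSpace ℝ (Fin d))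
    (w : Θ → EuclideanSpace ℝ (Fin d) → EuclideanSpace ℝ (Fin d))
    (p : Θ → EuclideanSpace ℝ (Fin d) → ℝ)
    (π' : Fin N → Fin N → EuclideanSpace ℝ (Fin d) → ℝ)
    (hp_nonneg : ∀ θ y, 0 ≤ p θ y)
    (hπ_nonneg : ∀ i j y, 0 ≤ π' i j y)
    -- S is a semiflow at time 0 and w is jointly continuous
    (hS0 : ∀ (i : Fin N) (y : EuclideanSpace ℝ (Fin d)), S i 0 y = y)
    (hw_cont : Continuous (fun q : Θ × EuclideanSpace ℝ (Fin d) => w q.1 q.2))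
    -- the distinguished data
    (θbar : Θ) (z : EuclideanSpace ℝ (Fin d)) (i : Fin N)
    (K : ℝ) (hK0 : 0 ≤ K) (hK1 : K < 1)
    -- (i) w θ̄ is a contraction with fixed point z
    (hlip : ∀ u v : EuclideanSpace ℝ (Fin d), ‖w θbar u - w θbar v‖ ≤ K * ‖u - v‖)
    (hfix : w θbar z = z)
    -- (ii) p θ̄ is everywhere positive
    (hp_pos : ∀ y : EuclideanSpace ℝ (Fin d), 0 < p θbar y)
    -- (iii) admissible paths of every length ending at i
    (hpath : ∀ n : ℕ, 1 ≤ n → ∃ js : Fin (n+1) → Fin N, js (Fin.last n) = i ∧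
      ∀ j₀ : Fin N, ∀ y ∈ Set.range (w θbar), ∀ k : Fin n,
        0 < π' (Function.update js 0 j₀ k.castSucc) (Function.update js 0 j₀ k.succ) y) :
    CondA S w p π' (z, i) := by
  intro V hV hzV y j
  obtain ⟨ε, hε, hball⟩ := Metric.isOpen_iff.mp hV z hzV
  -- iterate bound
  have hiter : ∀ m : ℕ, ‖(w θbar)^[m] y - z‖ ≤ K ^ m * ‖y - z‖ := by
    intro m
    induction m with
    | zero => simp
    | succ m ih =>
      rw [Function.iterate_succ_apply']
      calc ‖w θbar ((w θbar)^[m] y) - z‖ = ‖w θbar ((w θbar)^[m] y) - w θbar z‖ := by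
            rw [hfix]
        _ ≤ K * ‖(w θbar)^[m] y - z‖ := hlip _ _
        _ ≤ K * (K ^ m * ‖y - z‖) := by
            exact mul_le_mul_of_nonneg_left ih hK0
        _ = K ^ (m + 1) * ‖y - z‖ := by ring
  have htend : Filter.Tendsto (fun m : ℕ => K ^ m * ‖y - z‖) Filter.atTop (nhds 0) := by
    simpa using (tendsto_pow_atTop_nhds_zero_of_lt_one hK0 hK1).mul_const ‖y - z‖
  have hev2 : ∀ᶠ m : ℕ in Filter.atTop, 1 ≤ m ∧ K ^ m * ‖y - z‖ < ε := by
    filter_upwards [Filter.eventually_ge_atTop 1,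
      (htend.eventually (gt_mem_nhds hε))] with m h1 h2
    exact ⟨h1, h2⟩
  obtain ⟨n, hn1, hnε⟩ := hev2.exists
  obtain ⟨js0, hlast, hjs⟩ := hpath n hn1
  set js : Fin (n+1) → Fin N := Function.update js0 0 j with hjsdef
  refine ⟨n, hn1, js, fun _ => 0, fun _ => θbar, ?_, ?_, fun _ => le_refl 0, ?_, ?_⟩
  · simp [hjsdef]
  · have hne : (Fin.last n : Fin (n+1)) ≠ 0 := by
      simp [Fin.ext_iff, Fin.last]
      omega
    simp [hjsdef, Function.update_of_ne hne, hlast]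
  · -- compute trajectory
    have htraj : ∀ k : Fin (n+1),
        traj S w y js (fun _ => 0) (fun _ => θbar) k = (w θbar)^[(k : ℕ)] y := by
      intro k
      induction k using Fin.induction with
      | zero => rfl
      | succ m ih =>
        show traj S w y js (fun _ => 0) (fun _ => θbar) m.succ = _
        rw [traj, Fin.induction_succ]
        rw [show (Fin.induction (motive := fun _ => EuclideanSpace ℝ (Fin d)) y
          (fun m ym => w θbar (S (js m.castSucc) 0 ym)) m.castSucc)
            = traj S w y js (fun _ => 0) (fun _ => θbar) m.castSucc from rfl, ih]
        simp [hS0, Function.iterate_succ_apply', Fin.val_succ]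
    have h1 : traj S w y js (fun _ => 0) (fun _ => θbar) (Fin.last n) = (w θbar)^[n] y := by
      rw [htraj]; rfl
    rw [h1]
    apply hball
    rw [Metric.mem_ball, dist_eq_norm]
    exact lt_of_le_of_lt (hiter n) hnε
  · -- weight positive
    have htraj : ∀ k : Fin (n+1),
        traj S w y js (fun _ => 0) (fun _ => θbar) k = (w θbar)^[(k : ℕ)] y := by
      intro k
      induction k using Fin.induction with
      | zero => rfl
      | succ m ih =>
        show traj S w y js (fun _ => 0) (fun _ => θbar) m.succ = _
        rw [traj, Fin.induction_succ]
        rw [show (Fin.induction (motive := fun _ => EuclideanSpace ℝ (Fin d)) y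
          (fun m ym => w θbar (S (js m.castSucc) 0 ym)) m.castSucc)
            = traj S w y js (fun _ => 0) (fun _ => θbar) m.castSucc from rfl, ih]
        simp [hS0, Function.iterate_succ_apply', Fin.val_succ]
    apply Finset.prod_pos
    intro k _
    apply mul_pos (hp_pos _)
    rw [htraj]
    have : (w θbar)^[(k.succ : ℕ)] y ∈ Set.range (w θbar) := by
      rw [Fin.val_succ, Function.iterate_succ_apply']
      exact Set.mem_range_self _
    exact hjs j _ this k
end
end

section
/- Example 6.4. Let Λ > 0 and consider the transition probability on ℝ given by P(y, A) := ∫⁻ t in Set.Ioi (0:ℝ), ENNReal.ofReal (Λ * Real.exp (-(Λ*t))) * Set.indicator A 1 (Real.exp (-t) * y) dt for y ∈ ℝ and Borel A ⊆ ℝ. Then the Dirac measure at 0 is the unique invariant probability measure: Measure.dirac 0 satisfies ∫⁻ y, P(y,A) ∂(Measure.dirac 0) = Measure.dirac 0 A for every Borel A, and every Borel probability measure μ on ℝ satisfying ∫⁻ y, P(y,A) ∂μ = μ A for every Borel A equals Measure.dirac 0; moreover Measure.dirac 0 is mutually singular with Lebesgue measure on ℝ. -/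
open MeasureTheory ENNReal

noncomputable section

/-- The transition probability of the one-semiflow, one-transformation model on `ℝ` with
`S(t,y) = e^{-t} y` and `w = id`. -/
def Pex (Λ : ℝ) (y : ℝ) (A : Set ℝ) : ℝ≥0∞ :=
  ∫⁻ t in Set.Ioi (0:ℝ),
    ENNReal.ofReal (Λ * Real.exp (-(Λ*t))) *
    Set.indicator A (fun _ => (1:ℝ≥0∞)) (Real.exp (-t) * y)

/-! Started at `y`, the chain jumps to `e^{-T} y` with `T` exponentially distributed, so for
`A = {c ≤ |z|}` we have `P(·, A) ≤ 1_A` and `P(y, A) < 1` on `A`. Invariance,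
`∫ P(·, A) dμ = μ A = ∫ 1_A dμ`, then forces `P(·, A) = 1_A` μ-a.e., hence `μ A = 0`;
letting `c ↓ 0` shows that `μ` is concentrated at `0`. -/

open Real Set ProbabilityTheory

theorem measure_eq_zero_of_lintegral_eq_of_le_indicator {α : Type*} [MeasurableSpace α]
    {μ : Measure α} [IsFiniteMeasure μ] {f : α → ℝ≥0∞} {A : Set α} (hA : MeasurableSet A)
    (hf_le : ∀ x, f x ≤ A.indicator 1 x) (hf_lt : ∀ x ∈ A, f x < 1)
    (hf : ∫⁻ x, f x ∂μ = μ A) : μ A = 0 := by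
  have hf_ae : f =ᵐ[μ] A.indicator 1 :=
    ae_eq_of_ae_le_of_lintegral_le (ae_of_all _ hf_le) (hf ▸ measure_ne_top μ A)
      (aemeasurable_one.indicator hA) (by rw [lintegral_indicator_one hA, hf])
  refine measure_mono_null (fun x hx => ?_) hf_ae
  simpa [indicator_of_mem hx] using (hf_lt x hx).ne

theorem measure_compl_singleton_zero_eq_zero {E : Type*} [NormedAddGroup E] [MeasurableSpace E]
    {μ : Measure E} (h : ∀ c > 0, μ {x | c ≤ ‖x‖} = 0) : μ {0}ᶜ = 0 := by
  have hcover : ({0}ᶜ : Set E) ⊆ ⋃ n : ℕ, {x | 1 / ((n : ℝ) + 1) ≤ ‖x‖} := fun x hx => by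
    obtain ⟨n, hn⟩ := exists_nat_one_div_lt (norm_pos_iff.2 hx)
    exact mem_iUnion.2 ⟨n, hn.le⟩
  exact measure_mono_null hcover (measure_iUnion_null fun n => h _ Nat.one_div_pos_of_nat)

theorem Measure.eq_dirac_of_measure_compl_singleton_eq_zero {α : Type*} [MeasurableSpace α]
    [MeasurableSingletonClass α] {μ : Measure α} [IsProbabilityMeasure μ] {a : α}
    (h : μ {a}ᶜ = 0) : μ = Measure.dirac a := by
  rw [← Measure.restrict_eq_self_of_ae_mem (s := {a}) (mem_ae_iff.2 h), Measure.restrict_singleton,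
    (prob_compl_eq_zero_iff (measurableSet_singleton a)).1 h, one_smul]

namespace ProbabilityTheory

variable {r : ℝ}

theorem expMeasure_Iic_of_nonpos (hr : 0 < r) {x : ℝ} (hx : x ≤ 0) :
    expMeasure r (Iic x) = 0 := by
  have := isProbabilityMeasure_expMeasure hr
  rw [← ofReal_cdf, cdf_expMeasure_eq hr]
  split_ifs with h0
  · simp [le_antisymm hx h0]
  · simp

theorem expMeasure_Iic_lt_one (hr : 0 < r) (x : ℝ) : expMeasure r (Iic x) < 1 := by
  have := isProbabilityMeasure_expMeasure hr
  rw [← ofReal_cdf, cdf_expMeasure_eq hr, ENNReal.ofReal_lt_one]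
  split_ifs
  · linarith [exp_pos (-(r * x))]
  · exact one_pos

end ProbabilityTheory

theorem Pex_eq_expMeasure (Λ y : ℝ) {A : Set ℝ} (hA : MeasurableSet A) :
    Pex Λ y A = expMeasure Λ ((fun t => exp (-t) * y) ⁻¹' A) := by
  set B := (fun t => exp (-t) * y) ⁻¹' A
  have hB : MeasurableSet B := (by fun_prop : Measurable fun t => exp (-t) * y) hA
  calc Pex Λ y A = ∫⁻ t in Ici 0, exponentialPDF Λ t * B.indicator 1 t := by
        rw [Pex, setLIntegral_congr Ioi_ae_eq_Ici]
        refine setLIntegral_congr_fun measurableSet_Ici fun t ht => ?_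
        rw [exponentialPDF_of_nonneg ht]
        rfl
    _ = ∫⁻ t, exponentialPDF Λ t * B.indicator 1 t := by
        refine setLIntegral_eq_of_support_subset fun t ht => mem_Ici.2 <| not_lt.1 fun ht0 => ht ?_
        simp only [exponentialPDF_of_neg ht0, zero_mul]
    _ = ∫⁻ t, B.indicator 1 t ∂expMeasure Λ :=
        (lintegral_withDensity_eq_lintegral_mul _ (measurable_exponentialPDFReal Λ).ennreal_ofReal
          (measurable_one.indicator hB)).symm
    _ = expMeasure Λ B := lintegral_indicator_one hB

theorem Pex_zero_eq_indicator {Λ : ℝ} (hΛ : 0 < Λ) {A : Set ℝ} (hA : MeasurableSet A) :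
    Pex Λ 0 A = A.indicator 1 0 := by
  have := isProbabilityMeasure_expMeasure hΛ
  rw [Pex_eq_expMeasure Λ 0 hA]
  by_cases h0 : (0 : ℝ) ∈ A <;> simp [h0]

theorem Pex_le_expMeasure_Iic (Λ : ℝ) {c : ℝ} (hc : 0 < c) (y : ℝ) :
    Pex Λ y {z | c ≤ ‖z‖} ≤ expMeasure Λ (Iic (log (‖y‖ / c))) := by
  rw [Pex_eq_expMeasure Λ y (measurableSet_le measurable_const measurable_norm)]
  refine measure_mono fun t ht => ?_
  have hct : c ≤ exp (-t) * ‖y‖ := by simpa [norm_mul] using ht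
  have hy : 0 < ‖y‖ := pos_of_mul_pos_right (hc.trans_le hct) (exp_pos _).le
  rw [mem_Iic, le_log_iff_exp_le (div_pos hy hc), le_div_iff₀ hc]
  calc exp t * c ≤ exp t * (exp (-t) * ‖y‖) := by gcongr
    _ = ‖y‖ := by rw [← mul_assoc, ← exp_add, add_neg_cancel, exp_zero, one_mul]

theorem Pex_lt_one {Λ : ℝ} (hΛ : 0 < Λ) {c : ℝ} (hc : 0 < c) (y : ℝ) :
    Pex Λ y {z | c ≤ ‖z‖} < 1 :=
  (Pex_le_expMeasure_Iic Λ hc y).trans_lt (expMeasure_Iic_lt_one hΛ _)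

theorem Pex_eq_zero_of_norm_lt {Λ : ℝ} (hΛ : 0 < Λ) {c y : ℝ} (hc : 0 < c) (hy : ‖y‖ < c) :
    Pex Λ y {z | c ≤ ‖z‖} = 0 :=
  nonpos_iff_eq_zero.1 <| (Pex_le_expMeasure_Iic Λ hc y).trans_eq <| expMeasure_Iic_of_nonpos hΛ <|
    log_nonpos (by positivity) ((div_le_one hc).2 hy.le)

theorem measure_norm_ge_eq_zero_of_invariant {Λ : ℝ} (hΛ : 0 < Λ) {μ : Measure ℝ}
    [IsProbabilityMeasure μ] (hinv : ∀ A, MeasurableSet A → ∫⁻ y, Pex Λ y A ∂μ = μ A)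
    {c : ℝ} (hc : 0 < c) : μ {z | c ≤ ‖z‖} = 0 := by
  have hA : MeasurableSet {z : ℝ | c ≤ ‖z‖} := measurableSet_le measurable_const measurable_norm
  refine measure_eq_zero_of_lintegral_eq_of_le_indicator hA (fun y => ?_)
    (fun y _ => Pex_lt_one hΛ hc y) (hinv _ hA)
  by_cases hy : c ≤ ‖y‖
  · rw [indicator_of_mem (s := {z : ℝ | c ≤ ‖z‖}) hy]
    exact (Pex_lt_one hΛ hc y).le
  · rw [Pex_eq_zero_of_norm_lt hΛ hc (not_le.1 hy)]
    exact bot_le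

/-- **Example 6.4.** For the model on `ℝ` with the single semiflow `S(t,y) = e^{-t}y` and the
single (identity) jump transformation, the Dirac measure at `0` is the unique invariant
probability measure, and it is singular with respect to Lebesgue measure. -/
theorem ex_6_4 (Λ : ℝ) (hΛ : 0 < Λ) :
    (∀ A : Set ℝ, MeasurableSet A →
      (∫⁻ y, Pex Λ y A ∂(Measure.dirac (0:ℝ))) = Measure.dirac (0:ℝ) A) ∧
    (∀ μ : Measure ℝ, IsProbabilityMeasure μ →
      (∀ A : Set ℝ, MeasurableSet A → (∫⁻ y, Pex Λ y A ∂μ) = μ A) →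
      μ = Measure.dirac (0:ℝ)) ∧
    (Measure.dirac (0:ℝ)).MutuallySingular (volume : Measure ℝ) := by
  refine ⟨fun A hA => ?_, fun μ _ hinv => ?_, mutuallySingular_dirac 0 volume⟩
  · rw [lintegral_dirac, Measure.dirac_apply' _ hA, Pex_zero_eq_indicator hΛ hA]
  · exact Measure.eq_dirac_of_measure_compl_singleton_eq_zero <|
      measure_compl_singleton_zero_eq_zero fun c hc =>
        measure_norm_ge_eq_zero_of_invariant hΛ hinv hc
end
end
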